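/- arXiv:2506.18545 — 10 statements merged into one kernel-verified Lean document; each statement's English description precedes it below -/
import Mathlib

section
/- Let d be a natural number and let P(x) = \sum_{k=0}^{d} c_k x^k be a polynomial with integer coefficients. Let Q(y) = P(1-y) = \sum_{k=0}^{d} c'_k y^k be the polynomial obtained by the change of variable x = 1-y. Suppose that for some j \in \{0,\dots,d\} we have c'_j \neq 0 and c'_i = 0 for all i < j. Then Q has no real zero in the open interval (0, 1/(2 H(P) \binom{d+1}{j+2})). -/
/-!
Expanding `(1 - y)^e` binomially and summing with the hockey-stick identity bounds the
coefficients of `Q` by `|c'_i| ≤ H(P) · binom(d+1, i+1)`. Consecutive binomial coefficients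
`binom(n, k)` grow by a factor at most `n ≤ binom(n, k)` (for `1 ≤ k < n`), so with
`C := binom(d+1, j+2)` this is at most `H(P) · C^(i-j)` for `i > j`. At a zero `y` of `Q` the
lowest term `|c'_j| y^j ≥ y^j` would have to cancel the tail, which is at most
`H(P) y^j Σ_{m ≥ 1} (C y)^m ≤ 2 H(P) C y · y^j < y^j`.
-/

open Polynomial Finset

theorem Nat.self_le_choose {n k : ℕ} (hk : 1 ≤ k) (hkn : k < n) : n ≤ n.choose k := by
  induction n generalizing k with
  | zero => omega
  | succ n ih =>
    obtain ⟨k, rfl⟩ := Nat.exists_eq_add_of_le' hk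
    rcases Nat.eq_zero_or_pos k with rfl | hk0
    · simp
    · rw [Nat.choose_succ_succ']
      have hn : n ≤ n.choose k := ih hk0 (by omega)
      have hpos : 0 < n.choose (k + 1) := Nat.choose_pos (by omega)
      omega

theorem Nat.choose_add_le_choose_pow {n k : ℕ} (hk : 1 ≤ k) (m : ℕ) :
    n.choose (k + m) ≤ n.choose k ^ (m + 1) := by
  induction m with
  | zero => simp
  | succ m ih =>
    rcases lt_or_ge k n with hkn | hnk
    · calc n.choose (k + m + 1) ≤ n.choose (k + m + 1) * (k + m + 1) :=
            Nat.le_mul_of_pos_right _ (by omega)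
        _ = n.choose (k + m) * (n - (k + m)) := Nat.choose_succ_right_eq n (k + m)
        _ ≤ n.choose k ^ (m + 1) * n.choose k := by
          gcongr
          exact (Nat.sub_le _ _).trans (Nat.self_le_choose hk hkn)
    · simp [Nat.choose_eq_zero_of_lt (show n < k + (m + 1) by omega)]

theorem geom_sum_Ico_pow_sub_le {K : Type*} [Field K] [LinearOrder K] [IsStrictOrderedRing K]
    {x : K} (hx0 : 0 ≤ x) (hx1 : x < 1) (j n : ℕ) :
    ∑ i ∈ Ico (j + 1) n, x ^ (i - j) ≤ x / (1 - x) := by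
  have hgeom : ∑ k ∈ range (n - (j + 1)), x ^ k ≤ 1 / (1 - x) := by
    simpa [← range_eq_Ico] using geom_sum_Ico_le_of_lt_one (m := 0) (n := n - (j + 1)) hx0 hx1
  rw [sum_Ico_eq_sum_range]
  calc ∑ k ∈ range (n - (j + 1)), x ^ (j + 1 + k - j)
        = x * ∑ k ∈ range (n - (j + 1)), x ^ k := by
        rw [mul_sum]
        exact sum_congr rfl fun k _ => by rw [show j + 1 + k - j = k + 1 by omega, pow_succ']
    _ ≤ x * (1 / (1 - x)) := by gcongr
    _ = x / (1 - x) := mul_one_div x (1 - x)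

namespace Polynomial

section OrderedRing

variable {R : Type*} [CommRing R] [LinearOrder R] [IsStrictOrderedRing R]

theorem abs_coeff_one_sub_X_pow (k i : ℕ) :
    |(((1 : R[X]) - X) ^ k).coeff i| = (k.choose i : R) := by
  rw [show (1 : R[X]) - X = -(X + C (-1)) by simp; ring, neg_pow, ← C_1, ← C_neg, ← C_pow,
    coeff_C_mul, coeff_X_add_C_pow]
  simp [abs_mul]

theorem abs_coeff_comp_one_sub_X_le {P : R[X]} {d : ℕ} (hPd : P.natDegree ≤ d) {H : R}
    (hH : ∀ k ≤ d, |P.coeff k| ≤ H) (i : ℕ) :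
    |(P.comp (1 - X)).coeff i| ≤ H * (d + 1).choose (i + 1) := by
  have hockey : ∑ e ∈ range (d + 1), e.choose i = (d + 1).choose (i + 1) := by
    rw [← Nat.sum_Icc_choose]
    refine (sum_subset (fun e he => ?_) fun e he he' => ?_).symm
    · simp only [mem_Icc, mem_range] at he ⊢; omega
    · simp only [mem_Icc, mem_range] at he he'
      exact Nat.choose_eq_zero_of_lt (by omega)
  rw [P.as_sum_range' (d + 1) (by omega), sum_comp, finsetSum_coeff]
  simp only [monomial_comp, coeff_C_mul]
  calc |∑ e ∈ range (d + 1), P.coeff e * (((1 : R[X]) - X) ^ e).coeff i|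
      ≤ ∑ e ∈ range (d + 1), |P.coeff e| * |(((1 : R[X]) - X) ^ e).coeff i| := by
        simpa only [abs_mul] using
          abs_sum_le_sum_abs (fun e => P.coeff e * (((1 : R[X]) - X) ^ e).coeff i) (range (d + 1))
    _ ≤ ∑ e ∈ range (d + 1), H * (e.choose i : R) := by
        refine sum_le_sum fun e he => ?_
        rw [abs_coeff_one_sub_X_pow]
        exact mul_le_mul_of_nonneg_right (hH e (by simpa [Nat.lt_succ_iff] using he))
          (by positivity)
    _ = H * (d + 1).choose (i + 1) := by rw [← mul_sum, ← hockey, Nat.cast_sum]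

theorem abs_coeff_comp_one_sub_X_le_pow {P : R[X]} {d : ℕ} (hPd : P.natDegree ≤ d) {H : R}
    (hH : ∀ k ≤ d, |P.coeff k| ≤ H) {i j : ℕ} (hji : j < i) :
    |(P.comp (1 - X)).coeff i| ≤ H * ((d + 1).choose (j + 2) : R) ^ (i - j) := by
  have hchoose := Nat.choose_add_le_choose_pow (n := d + 1) (show 1 ≤ j + 2 by omega) (i - j - 1)
  rw [show j + 2 + (i - j - 1) = i + 1 by omega, show i - j - 1 + 1 = i - j by omega] at hchoose
  have hH0 : 0 ≤ H := (abs_nonneg _).trans (hH 0 d.zero_le)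
  refine (abs_coeff_comp_one_sub_X_le hPd hH i).trans ?_
  gcongr
  exact_mod_cast hchoose

end OrderedRing

theorem eval_ne_zero_of_abs_coeff_le_geometric {K : Type*} [Field K] [LinearOrder K]
    [IsStrictOrderedRing K] {p : K[X]} {j : ℕ} {M r y : K}
    (hlow : ∀ i < j, p.coeff i = 0) (hj : 1 ≤ |p.coeff j|)
    (hhigh : ∀ i, j < i → |p.coeff i| ≤ M * r ^ (i - j)) (hM : 0 ≤ M) (hr : 0 ≤ r)
    (hy : 0 < y) (hMry : (M + 1) * (r * y) < 1) : p.eval y ≠ 0 := by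
  set N := p.natDegree
  have hjN : j ≤ N := le_natDegree_of_ne_zero fun h => by rw [h, abs_zero] at hj; linarith
  have hry : r * y < 1 := by nlinarith [mul_nonneg hr hy.le]
  have htail : |∑ i ∈ Ico (j + 1) (N + 1), p.coeff i * y ^ i| < y ^ j := calc
    |∑ i ∈ Ico (j + 1) (N + 1), p.coeff i * y ^ i|
        ≤ ∑ i ∈ Ico (j + 1) (N + 1), |p.coeff i| * y ^ i := by
          refine (abs_sum_le_sum_abs (fun i => p.coeff i * y ^ i) _).trans_eq ?_
          simp only [abs_mul, abs_pow, abs_of_pos hy]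
    _ ≤ ∑ i ∈ Ico (j + 1) (N + 1), M * y ^ j * (r * y) ^ (i - j) := by
          refine sum_le_sum fun i hi => ?_
          have hji : j < i := by simp only [mem_Ico] at hi; omega
          calc |p.coeff i| * y ^ i ≤ M * r ^ (i - j) * y ^ i := by gcongr; exact hhigh i hji
            _ = M * y ^ j * (r * y) ^ (i - j) := by
              rw [mul_pow, ← Nat.add_sub_of_le hji.le, pow_add, Nat.add_sub_cancel_left]; ring
    _ = M * y ^ j * ∑ i ∈ Ico (j + 1) (N + 1), (r * y) ^ (i - j) := by rw [mul_sum]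
    _ ≤ M * y ^ j * ((r * y) / (1 - r * y)) := by
          gcongr; exact geom_sum_Ico_pow_sub_le (by positivity) hry j (N + 1)
    _ < y ^ j := by
          rw [← sub_pos] at hry
          rw [mul_div_assoc', div_lt_iff₀ hry]
          nlinarith [pow_pos hy j]
  intro heval
  rw [eval_eq_sum_range, ← sum_range_add_sum_Ico _ (by omega : j ≤ N + 1),
    sum_eq_sum_Ico_succ_bot (by omega : j < N + 1), sum_eq_zero fun i hi => by
      simp [hlow i (mem_range.mp hi)], zero_add] at heval
  have hcj : y ^ j ≤ |p.coeff j * y ^ j| := by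
    rw [abs_mul, abs_pow, abs_of_pos hy]; exact le_mul_of_one_le_left (by positivity) hj
  rw [eq_neg_of_add_eq_zero_left heval, abs_neg] at hcj
  exact (hcj.trans_lt htail).false

end Polynomial

theorem stmt_0_general (d : ℕ) (P : Polynomial ℤ) (hPd : P.natDegree ≤ d)
    (Q : Polynomial ℤ) (hQ : Q = P.comp (1 - Polynomial.X))
    (j : ℕ)
    (hcj : Q.coeff j ≠ 0) (hlow : ∀ i, i < j → Q.coeff i = 0) :
    ∀ y : ℝ, 0 < y →
      y < 1 / (2 * ((((Finset.range (d + 1)).sup fun k => (P.coeff k).natAbs) : ℕ) : ℝ) *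
        ((d + 1).choose (j + 2) : ℝ)) →
      Polynomial.aeval y Q ≠ 0 := by
  intro y hy hyH
  set H : ℕ := (range (d + 1)).sup fun k => (P.coeff k).natAbs
  set C : ℕ := (d + 1).choose (j + 2)
  -- `1 / 0 = 0`, so a positive `y` below the bound forces `H` and `C` to be nonzero.
  have hHC : 0 < 2 * (H : ℝ) * C := by
    by_contra! h
    linarith [one_div_nonpos.mpr h]
  have hH : (1 : ℝ) ≤ H := by
    have : H ≠ 0 := by rintro h; simp [h] at hHC
    exact_mod_cast Nat.one_le_iff_ne_zero.mpr this
  have hHCy : 2 * (H : ℝ) * C * y < 1 := by rwa [lt_div_iff₀ hHC, mul_comm] at hyH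
  have hQ' : Q.map (algebraMap ℤ ℝ) = (P.map (algebraMap ℤ ℝ)).comp (1 - X) := by
    simp [hQ, Polynomial.map_comp]
  have hPH : ∀ k ≤ d, |(P.map (algebraMap ℤ ℝ)).coeff k| ≤ H := fun k hk => by
    rw [coeff_map, eq_intCast, ← Int.cast_abs, Int.abs_eq_natAbs, Int.cast_natCast, Nat.cast_le]
    exact le_sup (f := fun k => (P.coeff k).natAbs) (mem_range.mpr (Nat.lt_succ_of_le hk))
  rw [aeval_def, eval₂_eq_eval_map]
  refine eval_ne_zero_of_abs_coeff_le_geometric (j := j) (M := (H : ℝ)) (r := (C : ℝ))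
    (fun i hi => by simp [hlow i hi]) ?_
    (fun i hji => hQ' ▸ abs_coeff_comp_one_sub_X_le_pow (natDegree_map_le.trans hPd) hPH hji)
    (by positivity) (by positivity) hy (by nlinarith [mul_pos hHC hy])
  rw [coeff_map, eq_intCast, ← Int.cast_abs]
  exact_mod_cast Int.one_le_abs hcj

/-- If `Q(y) = P(1-y)` where `P` has integer coefficients and degree at most `d`,
and the coefficients of `Q` of index `< j` vanish while the `j`-th does not, then `Q` has no
real zero in the open interval `(0, 1/(2 H(P) binom(d+1, j+2)))`, where `H(P)` is the height
of `P` (the maximum absolute value of its coefficients). -/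
theorem stmt_0 (d : ℕ) (P : Polynomial ℤ) (hPd : P.natDegree ≤ d)
    (Q : Polynomial ℤ) (hQ : Q = P.comp (1 - Polynomial.X))
    (j : ℕ) (hjd : j ≤ d)
    (hcj : Q.coeff j ≠ 0) (hlow : ∀ i, i < j → Q.coeff i = 0) :
    ∀ y : ℝ, 0 < y →
      y < 1 / (2 * ((((Finset.range (d + 1)).sup fun k => (P.coeff k).natAbs) : ℕ) : ℝ) *
        ((d + 1).choose (j + 2) : ℝ)) →
      Polynomial.aeval y Q ≠ 0 :=
  stmt_0_general d P hPd Q hQ j hcj hlow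
end

section
/- Let W \geq 1 and K be positive integers, and let \Delta(\alpha) = \sum_{k=0}^{K} a_k \alpha^k be a polynomial with integer coefficients satisfying |a_k| \leq 12W for all k. Write \Delta(1-\epsilon) = \sum_{i=0}^{K} (-1)^i b_i \epsilon^i, where b_i = \sum_{k=i}^{K} a_k \binom{k}{i}. Suppose that b_0 = b_1 = \dots = b_{j-1} = 0 and b_j \neq 0 for some j \geq 1. Then the polynomial \epsilon \mapsto \Delta(1-\epsilon) has no real zero in the open interval (0, 1/(24W \binom{K+1}{j+2})). -/
/-!
Expanding `(1 - ε)^k` binomially gives `Δ(1 - ε) = ∑ b_i (-ε)^i`, so the lowest surviving term is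
`b_j (-ε)^j`, of size at least `ε^j` because `b_j` is a nonzero integer. By the hockey-stick
identity `|b_i| ≤ 12W·C(K+1, i+1)`, and since `C(n, r+1)/C(n, r) ≤ C(n, j+2)` for `r ≥ j+1` we get
`C(K+1, i+1) ≤ c^(i-j)` with `c = C(K+1, j+2)`. The remaining terms are thus dominated by a
geometric series of ratio `cε ≤ 1/2`, of total at most `24Wc·ε^(j+1) < ε^j`.
-/

open Finset Polynomial

theorem Polynomial.aeval_one_sub_eq_sum {R A : Type*} [CommRing R] [CommRing A] [Algebra R A]
    {p : R[X]} {K : ℕ} (hp : p.natDegree ≤ K) (x : A) :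
    aeval (1 - x) p =
      ∑ i ∈ range (K + 1), (∑ k ∈ Icc i K, p.coeff k * k.choose i) • (-x) ^ i := by
  rw [aeval_eq_sum_range' (by omega : p.natDegree < K + 1)]
  have hexp : ∀ k, (1 - x) ^ k = ∑ i ∈ Ico 0 (k + 1), (-x) ^ i * k.choose i := by
    intro k
    rw [sub_eq_neg_add, add_pow, ← range_eq_Ico]
    simp
  simp_rw [hexp, smul_sum, sum_smul, range_eq_Ico]
  rw [← sum_Ico_Ico_comm]
  refine sum_congr rfl fun i _ => ?_
  rw [← Finset.Ico_add_one_right_eq_Icc]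
  refine sum_congr rfl fun k _ => ?_
  rw [Algebra.smul_def, Algebra.smul_def, map_mul, map_natCast]
  ring

theorem sum_range_eq_add_sum_of_eq_zero {M : Type*} [AddCommMonoid M] {u : ℕ → M} {j N : ℕ}
    (hj : j < N) (hu : ∀ i < j, u i = 0) :
    ∑ i ∈ range N, u i = u j + ∑ m ∈ range (N - (j + 1)), u (j + 1 + m) := by
  rw [range_eq_Ico, ← sum_Ico_consecutive _ (Nat.zero_le j) hj.le,
    sum_eq_zero fun i hi => hu i (mem_Ico.1 hi).2, zero_add,
    sum_eq_sum_Ico_succ_bot hj, sum_Ico_eq_sum_range]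

theorem Nat.choose_succ_le_mul_choose_succ {n r s : ℕ} (hsr : s ≤ r) :
    n.choose (r + 1) ≤ n.choose r * n.choose (s + 1) := by
  rcases lt_or_ge n s with hns | hsn
  · simp [Nat.choose_eq_zero_of_lt (by omega : n < r + 1)]
  have hr := Nat.choose_succ_right_eq n r
  have hs := Nat.choose_succ_right_eq n s
  have hpos : 0 < n.choose s := Nat.choose_pos hsn
  refine Nat.le_of_mul_le_mul_right (c := (r + 1) * (s + 1)) ?_ (by positivity)
  calc n.choose (r + 1) * ((r + 1) * (s + 1)) = n.choose r * ((n - r) * (s + 1)) := by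
        rw [← mul_assoc, hr, mul_assoc]
    _ ≤ n.choose r * (n.choose s * (n - s) * (r + 1)) := by
        refine Nat.mul_le_mul_left _ ?_
        calc (n - r) * (s + 1) ≤ (n - s) * (r + 1) := by gcongr
          _ ≤ n.choose s * (n - s) * (r + 1) := by
            rw [mul_assoc]; exact Nat.le_mul_of_pos_left _ hpos
    _ = n.choose r * n.choose (s + 1) * ((r + 1) * (s + 1)) := by rw [← hs]; ring

theorem Nat.choose_add_le_pow (n s m : ℕ) :
    n.choose (s + m + 1) ≤ n.choose (s + 1) ^ (m + 1) := by
  induction m with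
  | zero => simp
  | succ m ih =>
    calc n.choose (s + m + 1 + 1) ≤ n.choose (s + m + 1) * n.choose (s + 1) :=
          Nat.choose_succ_le_mul_choose_succ (by omega)
      _ ≤ n.choose (s + 1) ^ (m + 1) * n.choose (s + 1) := by gcongr
      _ = n.choose (s + 1) ^ (m + 1 + 1) := (pow_succ _ _).symm

theorem abs_sum_mul_choose_le {α : Type*} [CommRing α] [LinearOrder α] [IsStrictOrderedRing α]
    {a : ℕ → α} {M : α} (ha : ∀ k, |a k| ≤ M) (i K : ℕ) :
    |∑ k ∈ Icc i K, a k * k.choose i| ≤ M * (K + 1).choose (i + 1) := by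
  calc |∑ k ∈ Icc i K, a k * k.choose i| ≤ ∑ k ∈ Icc i K, |a k * k.choose i| :=
        abs_sum_le_sum_abs _ _
    _ ≤ ∑ k ∈ Icc i K, M * k.choose i := by
        gcongr with k
        rw [abs_mul, Nat.abs_cast]
        exact mul_le_mul_of_nonneg_right (ha k) (Nat.cast_nonneg _)
    _ = M * (K + 1).choose (i + 1) := by
        rw [← mul_sum, ← Nat.sum_Icc_choose]; push_cast; rfl

theorem abs_sum_mul_choose_le_pow {α : Type*} [CommRing α] [LinearOrder α]
    [IsStrictOrderedRing α] {a : ℕ → α} {M : α} (ha : ∀ k, |a k| ≤ M) (s m K : ℕ) :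
    |∑ k ∈ Icc (s + 1 + m) K, a k * k.choose (s + 1 + m)| ≤
      M * ((K + 1).choose (s + 2) : α) ^ (m + 1) := by
  have hM : 0 ≤ M := (abs_nonneg _).trans (ha 0)
  refine (abs_sum_mul_choose_le ha _ K).trans (mul_le_mul_of_nonneg_left ?_ hM)
  exact_mod_cast Nat.choose_add_le_pow (K + 1) (s + 1) m

theorem abs_sum_le_two_mul_of_abs_le_geom {u : ℕ → ℝ} {A q : ℝ} (hq₀ : 0 ≤ q) (hq : q ≤ 1 / 2)
    (hu : ∀ m, |u m| ≤ A * q ^ m) (N : ℕ) : |∑ m ∈ range N, u m| ≤ 2 * A := by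
  have hA : 0 ≤ A := (abs_nonneg _).trans ((hu 0).trans_eq (by simp))
  calc |∑ m ∈ range N, u m| ≤ ∑ m ∈ range N, A * (1 / 2) ^ m := by
        refine (abs_sum_le_sum_abs _ _).trans (sum_le_sum fun m _ => (hu m).trans ?_)
        gcongr
    _ ≤ A * 2 := by rw [← mul_sum]; exact mul_le_mul_of_nonneg_left (sum_geometric_two_le N) hA
    _ = 2 * A := mul_comm _ _

theorem abs_sum_mul_neg_pow_lt {β : ℕ → ℝ} {A q ε : ℝ} (hε : 0 < ε) (hq : 0 ≤ q)
    (hqε : q * ε ≤ 1 / 2) (hAqε : 2 * A * q * ε < 1) (hβ : ∀ m, |β m| ≤ A * q ^ (m + 1))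
    (j N : ℕ) : |∑ m ∈ range N, β m * (-ε) ^ (j + 1 + m)| < ε ^ j := by
  refine (abs_sum_le_two_mul_of_abs_le_geom (A := A * q * ε ^ (j + 1))
    (mul_nonneg hq hε.le) hqε (fun m => ?_) N).trans_lt ?_
  · rw [abs_mul, abs_pow, abs_neg, abs_of_pos hε]
    calc |β m| * ε ^ (j + 1 + m) ≤ A * q ^ (m + 1) * ε ^ (j + 1 + m) := by gcongr; exact hβ m
      _ = A * q * ε ^ (j + 1) * (q * ε) ^ m := by ring
  · calc 2 * (A * q * ε ^ (j + 1)) = 2 * A * q * ε * ε ^ j := by ring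
      _ < 1 * ε ^ j := mul_lt_mul_of_pos_right hAqε (by positivity)
      _ = ε ^ j := one_mul _

theorem stmt_3_general (W K : ℕ)
    (Δ : Polynomial ℤ) (hdeg : Δ.natDegree ≤ K)
    (hcoeff : ∀ k, |Δ.coeff k| ≤ 12 * (W : ℤ))
    (b : ℕ → ℤ) (hb : ∀ i, b i = ∑ k ∈ Finset.Icc i K, Δ.coeff k * (k.choose i : ℤ))
    (j : ℕ) (hlow : ∀ i, i < j → b i = 0) (hbj : b j ≠ 0) :
    ∀ ε : ℝ, 0 < ε → ε < 1 / (24 * (W : ℝ) * ((K + 1).choose (j + 2) : ℝ)) →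
      Polynomial.aeval (1 - ε) Δ ≠ 0 := by
  intro ε hε hεlt
  set c := (K + 1).choose (j + 2)
  have hdenom : 0 < 24 * (W : ℝ) * c := by
    by_contra h
    linarith [one_div_nonpos.2 (not_lt.1 h)]
  have hjK : j < K + 1 := by
    by_contra h
    simp [c, Nat.choose_eq_zero_of_lt (by omega : K + 1 < j + 2)] at hdenom
  have hεc : ε * (24 * W * c) < 1 := (lt_div_iff₀ hdenom).1 hεlt
  have hW : (1 : ℝ) ≤ W := by
    exact_mod_cast Nat.one_le_iff_ne_zero.2 (by rintro rfl; simp at hdenom)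
  have htail := abs_sum_mul_neg_pow_lt (β := fun m => (b (j + 1 + m) : ℝ)) (A := 12 * W)
    (q := c) hε (Nat.cast_nonneg _) (by nlinarith) (by linarith)
    (fun m => by rw [hb]; exact_mod_cast abs_sum_mul_choose_le_pow hcoeff j m K) j (K + 1 - (j + 1))
  have hlead : ε ^ j ≤ |(b j : ℝ) * (-ε) ^ j| := by
    rw [abs_mul, abs_pow, abs_neg, abs_of_pos hε]
    exact le_mul_of_one_le_left (by positivity) (by exact_mod_cast Int.one_le_abs hbj)
  rw [aeval_one_sub_eq_sum hdeg]
  simp only [← hb, zsmul_eq_mul]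
  rw [sum_range_eq_add_sum_of_eq_zero hjK fun i hi => by rw [hlow i hi, Int.cast_zero, zero_mul]]
  intro h
  rw [add_eq_zero_iff_eq_neg.1 h, abs_neg] at hlead
  linarith

/-- Let `W, K` be positive integers and `Δ` an integer polynomial of degree at
most `K` with coefficients bounded by `12W` in absolute value. Writing
`Δ(1-ε) = ∑ (-1)^i b_i ε^i` with `b_i = ∑_{k=i}^K a_k binom(k, i)`, if
`b_0 = ⋯ = b_{j-1} = 0` and `b_j ≠ 0` for some `j ≥ 1`, then the polynomial
`ε ↦ Δ(1-ε)` has no real zero in the open interval `(0, 1/(24 W binom(K+1, j+2)))`. -/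
theorem stmt_3 (W K : ℕ) (hW : 0 < W) (hK : 0 < K)
    (Δ : Polynomial ℤ) (hdeg : Δ.natDegree ≤ K)
    (hcoeff : ∀ k, |Δ.coeff k| ≤ 12 * (W : ℤ))
    (b : ℕ → ℤ) (hb : ∀ i, b i = ∑ k ∈ Finset.Icc i K, Δ.coeff k * (k.choose i : ℤ))
    (j : ℕ) (hj1 : 1 ≤ j) (hlow : ∀ i, i < j → b i = 0) (hbj : b j ≠ 0) :
    ∀ ε : ℝ, 0 < ε → ε < 1 / (24 * (W : ℝ) * ((K + 1).choose (j + 2) : ℝ)) →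
      Polynomial.aeval (1 - ε) Δ ≠ 0 :=
  stmt_3_general W K Δ hdeg hcoeff b hb j hlow hbj
end

section
/- Let n and M be positive integers and let Q be an n \times n matrix with natural number entries such that every row of Q sums to M. Then the polynomial \det(M I - X Q) \in \mathbb{Z}[X] (the determinant of the n \times n matrix over \mathbb{Z}[X] whose (i,j) entry is M \delta_{ij} - Q_{ij} X) can be written as \sum_{k=0}^{n} a_k X^k with |a_k| \leq \binom{n}{k} M^n for all k \in \{0,\dots,n\}. -/
/-- The matrix `M I - X Q` over `ℤ[X]`: its `(i,j)` entry is `M δ_{ij} - Q_{ij} X`. -/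
noncomputable def stochCharMatrix (n M : ℕ) (Q : Matrix (Fin n) (Fin n) ℕ) :
    Matrix (Fin n) (Fin n) (Polynomial ℤ) :=
  Matrix.of fun i j =>
    (if i = j then (M : Polynomial ℤ) else 0) - Polynomial.C (Q i j : ℤ) * Polynomial.X

/-!
Evaluating the characteristic polynomial of `X • A` at `c` shows that the coefficient of `X^k` in
`det (c I - X A)` is `(-1)^k c^(n-k)` times the sum of the `k × k` principal minors of `A`. By the
Leibniz expansion a determinant is at most the product of the absolute row sums, so for a
nonnegative `A` with row sums at most `c` each of the `binom(n, k)` minors is at most `c^k`.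
-/

open Polynomial Finset Matrix

namespace Matrix

variable {ι R : Type*} [Fintype ι] [DecidableEq ι]

theorem det_scalar_sub_X_smul [CommRing R] (c : R) (A : Matrix ι ι R) :
    det (scalar ι (C c) - (X : R[X]) • A.map C) =
      ∑ k ∈ range (Fintype.card ι + 1), C ((-1) ^ k * c ^ (Fintype.card ι - k) *
        ∑ s ∈ univ.powersetCard k, (A.submatrix (Subtype.val : s → ι) Subtype.val).det) *
          X ^ k := by
  nontriviality R
  rw [← eval_charpoly, eval_eq_sum_range, charpoly_natDegree_eq_dim, ← sum_range_reflect]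
  refine sum_congr rfl fun k hk => ?_
  have hk : k ≤ Fintype.card ι := Nat.lt_succ_iff.mp (mem_range.mp hk)
  rw [Nat.add_sub_cancel, charpoly_coeff_eq_sum_minors _ _ hk]
  have hminor : ∀ s ∈ univ.powersetCard k,
      (((X : R[X]) • A.map C).submatrix (Subtype.val : s → ι) Subtype.val).det =
        X ^ k * C (A.submatrix (Subtype.val : s → ι) Subtype.val).det := fun s hs => by
    change ((X : R[X]) • (A.submatrix (Subtype.val : s → ι) Subtype.val).map C).det = _
    rw [det_smul, Fintype.card_coe, (mem_powersetCard.mp hs).2, RingHom.map_det]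
    rfl
  rw [sum_congr rfl hminor, ← mul_sum, ← map_sum]
  simp only [map_mul, map_pow, map_neg, map_one]
  ring

theorem coeff_det_scalar_sub_X_smul [CommRing R] (c : R) (A : Matrix ι ι R) (k : ℕ) :
    (det (scalar ι (C c) - (X : R[X]) • A.map C)).coeff k =
      (-1) ^ k * c ^ (Fintype.card ι - k) *
        ∑ s ∈ univ.powersetCard k, (A.submatrix (Subtype.val : s → ι) Subtype.val).det := by
  rw [det_scalar_sub_X_smul, finsetSum_coeff]
  simp only [coeff_C_mul_X_pow, sum_ite_eq, mem_range]
  split_ifs with hk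
  · rfl
  · rw [powersetCard_eq_empty.mpr (by simpa using hk), sum_empty, mul_zero]

theorem det_le_prod_sum_row {S : Type*} [CommRing R] [Nontrivial R] [CommRing S] [LinearOrder S]
    [IsStrictOrderedRing S] (abv : AbsoluteValue R S) (A : Matrix ι ι R) :
    abv A.det ≤ ∏ i, ∑ j, abv (A i j) := by
  rw [← det_transpose]
  calc abv Aᵀ.det ≤ ∑ σ : Equiv.Perm ι, abv (Equiv.Perm.sign σ • ∏ i, A i (σ i)) := by
        rw [det_apply]; exact abv.sum_le _ _
    _ = ∑ σ : Equiv.Perm ι, ∏ i, abv (A i (σ i)) :=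
        sum_congr rfl fun σ _ => by rw [abv.map_units_int_smul, abv.map_prod]
    _ = ∑ f ∈ univ.map ⟨((⇑) : Equiv.Perm ι → ι → ι), DFunLike.coe_injective⟩,
          ∏ i, abv (A i (f i)) := by rw [sum_map]; rfl
    _ ≤ ∑ f : ι → ι, ∏ i, abv (A i (f i)) :=
        sum_le_sum_of_subset_of_nonneg (subset_univ _) fun _ _ _ =>
          prod_nonneg fun _ _ => abv.nonneg _
    _ = ∏ i, ∑ j, abv (A i j) := by rw [prod_univ_sum, Fintype.piFinset_univ]

theorem abs_det_submatrix_le_pow [CommRing R] [LinearOrder R] [IsStrictOrderedRing R]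
    {A : Matrix ι ι R} {c : R} (hA : ∀ i j, 0 ≤ A i j) (hc : ∀ i, ∑ j, A i j ≤ c)
    (s : Finset ι) : |(A.submatrix (Subtype.val : s → ι) Subtype.val).det| ≤ c ^ s.card := by
  calc |(A.submatrix (Subtype.val : s → ι) Subtype.val).det|
      ≤ ∏ i : s, ∑ j : s, |A i j| := det_le_prod_sum_row AbsoluteValue.abs _
    _ ≤ ∏ _i : s, c := prod_le_prod (fun _ _ => sum_nonneg fun _ _ => abs_nonneg _) fun i _ =>
        calc ∑ j : s, |A i j| = ∑ j ∈ s, A i j := by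
              rw [sum_coe_sort s fun j => |A i j|]
              exact sum_congr rfl fun j _ => abs_of_nonneg (hA i j)
          _ ≤ ∑ j, A i j := sum_le_sum_of_subset_of_nonneg (subset_univ s) fun j _ _ => hA i j
          _ ≤ c := hc i
    _ = c ^ s.card := by rw [prod_const, card_univ, Fintype.card_coe]

end Matrix

theorem stochCharMatrix_eq (n M : ℕ) (Q : Matrix (Fin n) (Fin n) ℕ) :
    stochCharMatrix n M Q =
      scalar (Fin n) (C (M : ℤ)) - (X : ℤ[X]) • (Q.map ((↑) : ℕ → ℤ)).map C := by
  ext i j : 1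
  by_cases h : i = j <;> simp [stochCharMatrix, h, mul_comm, Matrix.natCast_apply]

theorem stmt_4_general (n M : ℕ)
    (Q : Matrix (Fin n) (Fin n) ℕ) (hQ : ∀ i, ∑ j, Q i j = M) :
    (stochCharMatrix n M Q).det.natDegree ≤ n ∧
      ∀ k ≤ n, |(stochCharMatrix n M Q).det.coeff k| ≤ (n.choose k : ℤ) * (M : ℤ) ^ n := by
  have hcoeff := coeff_det_scalar_sub_X_smul (M : ℤ) (Q.map ((↑) : ℕ → ℤ))
  rw [Fintype.card_fin] at hcoeff
  rw [stochCharMatrix_eq]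
  refine ⟨natDegree_le_iff_coeff_eq_zero.mpr fun k hk => ?_, fun k hk => ?_⟩
  · rw [hcoeff, powersetCard_eq_empty.mpr (by simpa using hk), sum_empty, mul_zero]
  · have hminor := abs_det_submatrix_le_pow (A := Q.map ((↑) : ℕ → ℤ)) (c := (M : ℤ))
      (fun _ _ => Int.natCast_nonneg _) (fun i => by simp [← hQ i])
    rw [hcoeff, abs_mul, abs_mul, abs_pow, abs_neg, abs_one, one_pow, one_mul, abs_pow,
      Nat.abs_cast]
    calc (M : ℤ) ^ (n - k) * |∑ s ∈ univ.powersetCard k, _|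
        ≤ (M : ℤ) ^ (n - k) * ∑ _s ∈ univ.powersetCard k, (M : ℤ) ^ k := by
          gcongr
          refine (abs_sum_le_sum_abs _ _).trans (sum_le_sum fun s hs => ?_)
          rw [← (mem_powersetCard.mp hs).2]
          exact hminor s
      _ = (n.choose k : ℤ) * (M : ℤ) ^ n := by
          rw [sum_const, card_powersetCard, card_univ, Fintype.card_fin, nsmul_eq_mul,
            mul_left_comm, ← pow_add, Nat.sub_add_cancel hk]

/-- If `Q` is an `n × n` matrix of naturals whose rows each sum to `M`, then
`det(M I - X Q) = ∑_{k=0}^n a_k X^k` with `|a_k| ≤ binom(n,k) M^n` for all `k ≤ n`. -/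
theorem stmt_4 (n M : ℕ) (hn : 0 < n) (hM : 0 < M)
    (Q : Matrix (Fin n) (Fin n) ℕ) (hQ : ∀ i, ∑ j, Q i j = M) :
    (stochCharMatrix n M Q).det.natDegree ≤ n ∧
      ∀ k ≤ n, |(stochCharMatrix n M Q).det.coeff k| ≤ (n.choose k : ℤ) * (M : ℤ) ^ n :=
  stmt_4_general n M Q hQ
end

section
/- Let n \geq 2 and M be positive integers and let Q be an n \times n matrix with natural number entries such that every row of Q sums to M. For each pair of indices i, j \in \{1,\dots,n\}, the (i,j) cofactor of the matrix M I - X Q over \mathbb{Z}[X], i.e. (-1)^{i+j} times the determinant of the (n-1) \times (n-1) matrix obtained by deleting row i and column j from M I - X Q, is a polynomial \sum_{k=0}^{n-1} a_k X^k with |a_k| \leq \binom{n-1}{k} M^{n-1} for all k \in \{0,\dots,n-1\}. -/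
open Polynomial Finset

lemma abs_det_le_pow {N : ℕ} (B : Matrix (Fin N) (Fin N) ℤ) (M : ℤ)
    (h : ∀ a, ∑ b, |B a b| ≤ M) : |B.det| ≤ M ^ N := by
  rw [← Matrix.det_transpose, Matrix.det_apply']
  have step1 : |∑ σ : Equiv.Perm (Fin N), (Equiv.Perm.sign σ : ℤ) * ∏ a, B.transpose (σ a) a|
      ≤ ∑ σ : Equiv.Perm (Fin N), ∏ a, |B a (σ a)| := by
    refine (Finset.abs_sum_le_sum_abs _ _).trans (le_of_eq ?_)
    refine Finset.sum_congr rfl fun σ _ => ?_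
    rw [abs_mul, ← Finset.abs_prod]
    rcases Int.units_eq_one_or (Equiv.Perm.sign σ) with h1 | h1 <;>
      simp [h1, Matrix.transpose_apply]
  refine step1.trans ?_
  have step2 : ∑ σ : Equiv.Perm (Fin N), ∏ a, |B a (σ a)|
      ≤ ∑ f ∈ Fintype.piFinset (fun _ : Fin N => (univ : Finset (Fin N))),
          ∏ a, |B a (f a)| := by
    rw [← Finset.sum_image (f := fun f : Fin N → Fin N => ∏ a, |B a (f a)|)
        (g := fun σ : Equiv.Perm (Fin N) => ⇑σ)
        (fun x _ y _ hxy => Equiv.coe_fn_injective hxy)]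
    refine Finset.sum_le_sum_of_subset_of_nonneg ?_ ?_
    · intro f _; simp [Fintype.mem_piFinset]
    · intro f _ _; exact Finset.prod_nonneg fun a _ => abs_nonneg _
  refine step2.trans ?_
  rw [← Finset.prod_univ_sum (fun _ : Fin N => (univ : Finset (Fin N))) (fun a b => |B a b|)]
  calc ∏ a, ∑ b, |B a b| ≤ ∏ _a : Fin N, M :=
        Finset.prod_le_prod (fun a _ => Finset.sum_nonneg fun b _ => abs_nonneg _)
          (fun a _ => h a)
    _ = M ^ N := by simp


lemma coeff_det_linear {N : ℕ} (c d : Fin N → Fin N → ℤ) (k : ℕ) :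
    (Matrix.det (Matrix.of fun a b => C (c a b) + C (d a b) * X)).coeff k
      = ∑ t ∈ Finset.powersetCard k (univ : Finset (Fin N)),
          (Matrix.of fun a b => if a ∈ t then d a b else c a b).det := by
  have mix : ∀ (σ : Equiv.Perm (Fin N)) (t : Finset (Fin N)),
      ∏ a : Fin N, (if a ∈ t then d a (σ a) else c a (σ a))
        = (∏ a ∈ t, d a (σ a)) * ∏ a ∈ univ \ t, c a (σ a) := by
    intro σ t
    rw [Finset.prod_ite]
    congr 1
    · exact Finset.prod_congr (by simp [Finset.filter_mem_eq_inter]) fun _ _ => rfl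
    · exact Finset.prod_congr (Finset.sdiff_eq_filter _ _).symm fun _ _ => rfl
  have expand : ∀ σ : Equiv.Perm (Fin N),
      (∏ a : Fin N, (C (c a (σ a)) + C (d a (σ a)) * X))
        = ∑ t ∈ (univ : Finset (Fin N)).powerset,
            C ((∏ a ∈ t, d a (σ a)) * ∏ a ∈ univ \ t, c a (σ a)) * X ^ t.card := by
    intro σ
    rw [Finset.prod_congr rfl (fun a _ => add_comm (C (c a (σ a))) (C (d a (σ a)) * X)),
      Finset.prod_add]
    refine Finset.sum_congr rfl fun t _ => ?_
    rw [Finset.prod_mul_distrib, Finset.prod_const, map_mul, map_prod, map_prod]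
    ring
  rw [← Matrix.det_transpose, Matrix.det_apply', Polynomial.finset_sum_coeff]
  have lhs_eq : ∀ σ : Equiv.Perm (Fin N),
      ((((Equiv.Perm.sign σ : ℤ) : Polynomial ℤ)) * ∏ a,
        (Matrix.of fun a b => C (c a b) + C (d a b) * X).transpose (σ a) a).coeff k
      = ∑ t ∈ Finset.powersetCard k (univ : Finset (Fin N)),
          (Equiv.Perm.sign σ : ℤ) * ∏ a : Fin N,
            (if a ∈ t then d a (σ a) else c a (σ a)) := by
    intro σ
    have h1 : (∏ a, (Matrix.of fun a b => C (c a b) + C (d a b) * X).transpose (σ a) a)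
        = ∏ a : Fin N, (C (c a (σ a)) + C (d a (σ a)) * X) := by
      refine Finset.prod_congr rfl fun a _ => ?_
      simp [Matrix.transpose_apply]
    rw [h1, expand σ, Polynomial.coeff_intCast_mul, Polynomial.finset_sum_coeff]
    have h2 : ∀ t ∈ (univ : Finset (Fin N)).powerset,
        (C ((∏ a ∈ t, d a (σ a)) * ∏ a ∈ univ \ t, c a (σ a)) * X ^ t.card).coeff k
        = if t.card = k then (∏ a ∈ t, d a (σ a)) * ∏ a ∈ univ \ t, c a (σ a) else 0 := by
      intro t _
      rw [Polynomial.coeff_C_mul, Polynomial.coeff_X_pow, mul_ite, mul_one, mul_zero]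
      exact if_congr eq_comm rfl rfl
    rw [Finset.sum_congr rfl h2, ← Finset.sum_filter, ← Finset.powersetCard_eq_filter,
      Finset.mul_sum]
    refine Finset.sum_congr rfl fun t _ => ?_
    rw [mix σ t]
    norm_cast
  rw [Finset.sum_congr rfl fun σ _ => lhs_eq σ, Finset.sum_comm]
  refine Finset.sum_congr rfl fun t _ => ?_
  rw [← Matrix.det_transpose, Matrix.det_apply']
  refine Finset.sum_congr rfl fun σ _ => ?_
  have h3 : (∏ a, (Matrix.of fun a b => if a ∈ t then d a b else c a b).transpose (σ a) a)
      = ∏ a : Fin N, (if a ∈ t then d a (σ a) else c a (σ a)) :=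
    Finset.prod_congr rfl fun a _ => by simp [Matrix.transpose_apply]
  rw [h3]
  norm_cast

/-- Let `n = m + 2 ≥ 2` and `M` be positive integers, and `Q` an `n × n` matrix
of naturals whose rows each sum to `M`. For indices `i, j`, the `(i,j)` cofactor of
`M I - X Q`, i.e. `(-1)^(i+j)` times the determinant of the `(n-1) × (n-1)` matrix obtained
by deleting row `i` and column `j`, is a polynomial `∑_{k=0}^{n-1} a_k X^k` with
`|a_k| ≤ binom(n-1, k) M^(n-1)` for all `k ≤ n-1`. -/
theorem stmt_5 (m M : ℕ) (hM : 0 < M)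
    (Q : Matrix (Fin (m + 2)) (Fin (m + 2)) ℕ) (hQ : ∀ i, ∑ j, Q i j = M)
    (i j : Fin (m + 2)) :
    ((-1 : Polynomial ℤ) ^ ((i : ℕ) + (j : ℕ)) *
        ((stochCharMatrix (m + 2) M Q).submatrix i.succAbove j.succAbove).det).natDegree
        ≤ m + 1 ∧
      ∀ k ≤ m + 1,
        |((-1 : Polynomial ℤ) ^ ((i : ℕ) + (j : ℕ)) *
            ((stochCharMatrix (m + 2) M Q).submatrix i.succAbove j.succAbove).det).coeff k|
          ≤ ((m + 1).choose k : ℤ) * (M : ℤ) ^ (m + 1) := by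
  set e := (i : ℕ) + (j : ℕ) with he
  set c : Fin (m + 1) → Fin (m + 1) → ℤ :=
    fun a b => if i.succAbove a = j.succAbove b then (M : ℤ) else 0 with hc_def
  set d : Fin (m + 1) → Fin (m + 1) → ℤ :=
    fun a b => -(Q (i.succAbove a) (j.succAbove b) : ℤ) with hd_def
  -- the submatrix has linear entries
  have hA : (stochCharMatrix (m + 2) M Q).submatrix i.succAbove j.succAbove
      = Matrix.of fun a b => C (c a b) + C (d a b) * X := by
    refine Matrix.ext fun a b => ?_
    simp only [Matrix.submatrix_apply, stochCharMatrix, Matrix.of_apply, hc_def, hd_def]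
    split_ifs with h
    · rw [map_neg, ← Polynomial.C_eq_natCast]; push_cast; ring
    · rw [map_neg, map_zero]; ring
  -- coefficient of the determinant
  have hcoeff : ∀ k : ℕ,
      (((stochCharMatrix (m + 2) M Q).submatrix i.succAbove j.succAbove).det).coeff k
      = ∑ t ∈ Finset.powersetCard k (univ : Finset (Fin (m + 1))),
          (Matrix.of fun a b => if a ∈ t then d a b else c a b).det := by
    intro k
    rw [hA, coeff_det_linear]
  -- sign factor is harmless for coefficients
  have hsign : ∀ (p : Polynomial ℤ) (k : ℕ),
      ((-1 : Polynomial ℤ) ^ e * p).coeff k = (-1 : ℤ) ^ e * p.coeff k := by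
    intro p k
    have : ((-1 : Polynomial ℤ) ^ e) = C ((-1 : ℤ) ^ e) := by
      rw [map_pow, map_neg, map_one]
    rw [this, Polynomial.coeff_C_mul]
  -- row sum bounds
  have hd_bound : ∀ a, ∑ b, |d a b| ≤ (M : ℤ) := by
    intro a
    have h1 : ∑ b, |d a b| = ((∑ b, Q (i.succAbove a) (j.succAbove b) : ℕ) : ℤ) := by
      push_cast
      exact Finset.sum_congr rfl fun b _ => by
        simp [hd_def, abs_of_nonpos (neg_nonpos.2 (Int.natCast_nonneg _))]
    rw [h1]
    have h2 := Fin.sum_univ_succAbove (fun b' => Q (i.succAbove a) b') j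
    have h3 : ∑ b' : Fin (m + 1 + 1), Q (i.succAbove a) b' = M := hQ (i.succAbove a)
    have : (∑ b, Q (i.succAbove a) (j.succAbove b)) ≤ M := by omega
    exact_mod_cast this
  have hc_bound : ∀ a, ∑ b, |c a b| ≤ (M : ℤ) := by
    intro a
    have habs : ∀ b, |c a b| = c a b := by
      intro b
      simp only [hc_def]
      split_ifs <;> simp
    rw [Finset.sum_congr rfl fun b _ => habs b]
    by_cases hex : ∃ b, i.succAbove a = j.succAbove b
    · obtain ⟨b0, hb0⟩ := hex
      rw [Finset.sum_eq_single b0]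
      · show (if i.succAbove a = j.succAbove b0 then (M : ℤ) else 0) ≤ (M : ℤ)
        simp [hb0]
      · intro b _ hb
        show (if i.succAbove a = j.succAbove b then (M : ℤ) else 0) = 0
        rw [if_neg]
        intro hEq
        exact hb (Fin.succAbove_right_injective (hEq.symm.trans hb0))
      · intro h; exact absurd (Finset.mem_univ b0) h
    · push_neg at hex
      have : ∀ b ∈ (univ : Finset (Fin (m+1))), c a b = 0 := by
        intro b _; simp [hc_def, hex b]
      rw [Finset.sum_eq_zero this]
      exact_mod_cast M.zero_le
  -- each mixed determinant is bounded
  have hdet : ∀ t : Finset (Fin (m + 1)),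
      |(Matrix.of fun a b => if a ∈ t then d a b else c a b).det| ≤ (M : ℤ) ^ (m + 1) := by
    intro t
    refine abs_det_le_pow _ _ fun a => ?_
    by_cases ha : a ∈ t
    · simpa [Matrix.of_apply, ha] using hd_bound a
    · simpa [Matrix.of_apply, ha] using hc_bound a
  constructor
  · -- degree bound
    rw [Polynomial.natDegree_le_iff_coeff_eq_zero]
    intro k hk
    rw [hsign, hcoeff]
    have : Finset.powersetCard k (univ : Finset (Fin (m + 1))) = ∅ := by
      rw [Finset.powersetCard_eq_empty]
      simpa using hk
    rw [this, Finset.sum_empty, mul_zero]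
  · -- coefficient bound
    intro k hk
    rw [hsign, hcoeff, abs_mul, abs_pow, abs_neg, abs_one, one_pow, one_mul]
    calc |∑ t ∈ Finset.powersetCard k (univ : Finset (Fin (m + 1))),
            (Matrix.of fun a b => if a ∈ t then d a b else c a b).det|
        ≤ ∑ t ∈ Finset.powersetCard k (univ : Finset (Fin (m + 1))),
            |(Matrix.of fun a b => if a ∈ t then d a b else c a b).det| :=
          Finset.abs_sum_le_sum_abs _ _
      _ ≤ ∑ _t ∈ Finset.powersetCard k (univ : Finset (Fin (m + 1))), (M : ℤ) ^ (m + 1) :=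
          Finset.sum_le_sum fun t _ => hdet t
      _ = ((m + 1).choose k : ℤ) * (M : ℤ) ^ (m + 1) := by
          rw [Finset.sum_const, Finset.card_powersetCard, Finset.card_univ, Fintype.card_fin,
            nsmul_eq_mul]
end

section
/- Let n, M, W be positive integers. Let Q and Q' be n \times n matrices with natural number entries whose rows each sum to M, and let r, r' \in \mathbb{Z}^n be vectors with |r_j| \leq W and |r'_j| \leq W for all j. Fix an index i \in \{1,\dots,n\} and define the polynomial \Delta(X) := \det(M I - X Q') \cdot (\sum_{j=1}^{n} \mathrm{cof}_{ji}(M I - X Q) \, r_j) - \det(M I - X Q) \cdot (\sum_{j=1}^{n} \mathrm{cof}_{ji}(M I - X Q') \, r'_j) over \mathbb{Z}[X]. Then \Delta can be written as \sum_{k=0}^{2n-1} c_k X^k, where |c_k| \leq 2 n W M^{2n-1} \binom{2n-1}{k} for all k \in \{0,\dots,2n-1\}. -/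
/-- The `(j,i)` cofactor of an `(m+1) × (m+1)` matrix over `ℤ[X]`: `(-1)^(j+i)` times the
determinant of the matrix obtained by deleting row `j` and column `i`. -/
noncomputable def cofactor (m : ℕ) (A : Matrix (Fin (m + 1)) (Fin (m + 1)) (Polynomial ℤ))
    (j i : Fin (m + 1)) : Polynomial ℤ :=
  (-1 : Polynomial ℤ) ^ ((j : ℕ) + (i : ℕ)) * (A.submatrix j.succAbove i.succAbove).det

/-
Entrywise, `M I - X Q` is majorized coefficientwise in absolute value by `M I + X Q`, whose rows
sum to `M (1 + X)` when `Q` is row-stochastic. Expanding a determinant over all maps `Fin n → Fin n`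
rather than over permutations shows that it is majorized by the product of the majorants' row sums,
so `det (M I - X Q)` is majorized by `(M (1 + X))^n` and every cofactor by `(M (1 + X))^(n-1)`.
Majorization is compatible with sums and products, so each of the two terms of `Δ` is majorized by
`n W M^(2n-1) (1 + X)^(2n-1)`, whose `k`-th coefficient is `n W M^(2n-1) binom(2n-1, k)`.
-/

open Polynomial Finset

namespace Polynomial

variable {R : Type*} [CommRing R] [LinearOrder R]

def Majorizes (P p : R[X]) : Prop := ∀ k, |p.coeff k| ≤ P.coeff k

namespace Majorizes

variable {P Q p q : R[X]}

theorem trans (hQP : Majorizes Q P) (hPp : Majorizes P p) : Majorizes Q p :=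
  fun k => (hPp k).trans ((le_abs_self _).trans (hQP k))

theorem neg (h : Majorizes P p) : Majorizes P (-p) := by
  intro k
  rw [coeff_neg, abs_neg]
  exact h k

theorem neg_one_pow_mul (h : Majorizes P p) (e : ℕ) : Majorizes P ((-1) ^ e * p) := by
  rcases neg_one_pow_eq_or R[X] e with he | he <;> rw [he]
  · rwa [one_mul]
  · rw [neg_one_mul]
    exact h.neg

theorem units_zsmul (h : Majorizes P p) (u : ℤˣ) : Majorizes P (u • p) := by
  rcases Int.units_eq_one_or u with rfl | rfl
  · rwa [one_smul]
  · rw [Units.neg_smul, one_smul]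
    exact h.neg

variable [IsStrictOrderedRing R]

theorem refl (h : ∀ k, 0 ≤ P.coeff k) : Majorizes P P :=
  fun k => (abs_of_nonneg (h k)).le

theorem coeff_nonneg (h : Majorizes P p) (k : ℕ) : 0 ≤ P.coeff k :=
  (abs_nonneg _).trans (h k)

theorem one : Majorizes (1 : R[X]) 1 := by
  intro k
  rw [coeff_one]
  split_ifs <;> simp

theorem add (h : Majorizes P p) (h' : Majorizes Q q) : Majorizes (P + Q) (p + q) := fun k => by
  rw [coeff_add, coeff_add]
  exact (abs_add_le _ _).trans (add_le_add (h k) (h' k))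

theorem sub (h : Majorizes P p) (h' : Majorizes Q q) : Majorizes (P + Q) (p - q) := by
  rw [sub_eq_add_neg]
  exact h.add h'.neg

theorem mul (h : Majorizes P p) (h' : Majorizes Q q) : Majorizes (P * Q) (p * q) := fun k => by
  rw [coeff_mul, coeff_mul]
  refine (abs_sum_le_sum_abs _ _).trans (sum_le_sum fun x _ => ?_)
  rw [abs_mul]
  exact mul_le_mul (h x.1) (h' x.2) (abs_nonneg _) (h.coeff_nonneg _)

theorem mul_C (h : Majorizes P p) {a w : R} (ha : |a| ≤ w) : Majorizes (P * C w) (p * C a) :=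
  fun k => by
  rw [coeff_mul_C, coeff_mul_C, abs_mul]
  exact mul_le_mul (h k) ha (abs_nonneg _) (h.coeff_nonneg k)

theorem sum {ι : Type*} (s : Finset ι) {P p : ι → R[X]} (h : ∀ i ∈ s, Majorizes (P i) (p i)) :
    Majorizes (∑ i ∈ s, P i) (∑ i ∈ s, p i) := by
  induction s using Finset.cons_induction with
  | empty => simp [Majorizes]
  | cons a s ha ih =>
    rw [sum_cons, sum_cons]
    exact (h a (mem_cons_self _ _)).add (ih fun i hi => h i (mem_cons_of_mem hi))

theorem prod {ι : Type*} (s : Finset ι) {P p : ι → R[X]} (h : ∀ i ∈ s, Majorizes (P i) (p i)) :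
    Majorizes (∏ i ∈ s, P i) (∏ i ∈ s, p i) := by
  induction s using Finset.cons_induction with
  | empty => simpa using one
  | cons a s ha ih =>
    rw [prod_cons, prod_cons]
    exact (h a (mem_cons_self _ _)).mul (ih fun i hi => h i (mem_cons_of_mem hi))

theorem natDegree_le (h : Majorizes P p) : p.natDegree ≤ P.natDegree := by
  refine natDegree_le_iff_coeff_eq_zero.mpr fun k hk => abs_eq_zero.mp ?_
  exact le_antisymm ((h k).trans_eq (coeff_eq_zero_of_natDegree_lt hk)) (abs_nonneg _)

theorem sum_succAbove {m : ℕ} {L : R[X]} {D : Fin (m + 1) → R[X]} (hD : ∀ j k, 0 ≤ (D j).coeff k)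
    (h : Majorizes L (∑ j, D j)) (i : Fin (m + 1)) : Majorizes L (∑ b, D (i.succAbove b)) := by
  intro k
  have hsum_nonneg : 0 ≤ (∑ b, D (i.succAbove b)).coeff k := by
    rw [finsetSum_coeff]
    exact sum_nonneg fun b _ => hD _ k
  calc |(∑ b, D (i.succAbove b)).coeff k|
      ≤ (D i).coeff k + (∑ b, D (i.succAbove b)).coeff k := by
        rw [abs_of_nonneg hsum_nonneg]
        exact le_add_of_nonneg_left (hD i k)
    _ = (∑ j, D j).coeff k := by rw [Fin.sum_univ_succAbove _ i, coeff_add]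
    _ ≤ L.coeff k := (le_abs_self _).trans (h k)

end Majorizes

end Polynomial

namespace Matrix

variable {R : Type*} [CommRing R] [LinearOrder R] [IsStrictOrderedRing R]
  {n : Type*} [Fintype n] [DecidableEq n] {B D : Matrix n n R[X]}

theorem majorizes_det (h : ∀ i j, Majorizes (D i j) (B i j)) :
    Majorizes (∏ i, ∑ j, D i j) B.det := by
  intro k
  have hterm : ∀ f : n → n, Majorizes (∏ i, D i (f i)) (∏ i, B i (f i)) :=
    fun f => Majorizes.prod univ fun i _ => h i (f i)
  let toFun : Equiv.Perm n ↪ (n → n) := ⟨fun σ => σ, DFunLike.coe_injective⟩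
  have hexpand : ∏ i, ∑ j, D i j = ∑ f : n → n, ∏ i, D i (f i) :=
    Fintype.prod_sum fun i j => D i j
  rw [← det_transpose, det_apply, hexpand, finsetSum_coeff, finsetSum_coeff]
  simp only [transpose_apply]
  calc |∑ σ : Equiv.Perm n, (Equiv.Perm.sign σ • ∏ i, B i (σ i)).coeff k|
      ≤ ∑ σ : Equiv.Perm n, (∏ i, D i (σ i)).coeff k :=
        (abs_sum_le_sum_abs _ _).trans (sum_le_sum fun σ _ => (hterm σ).units_zsmul _ k)
    _ = ∑ f ∈ univ.map toFun, (∏ i, D i (f i)).coeff k := by rw [sum_map]; rfl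
    _ ≤ ∑ f : n → n, (∏ i, D i (f i)).coeff k :=
        sum_le_sum_of_subset_of_nonneg (subset_univ _) fun f _ _ => (hterm f).coeff_nonneg k

theorem majorizes_det_of_row_sum {L : R[X]} (h : ∀ i j, Majorizes (D i j) (B i j))
    (hL : ∀ i, Majorizes L (∑ j, D i j)) : Majorizes (L ^ Fintype.card n) B.det := by
  rw [← card_univ, ← prod_const]
  exact (Majorizes.prod univ fun i _ => hL i).trans (majorizes_det h)

end Matrix

noncomputable def stochCharMajorant (n M : ℕ) (Q : Matrix (Fin n) (Fin n) ℕ) :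
    Matrix (Fin n) (Fin n) ℤ[X] :=
  Matrix.of fun i j => (if i = j then (M : ℤ[X]) else 0) + C (Q i j : ℤ) * X

section

variable {n M : ℕ}

theorem majorizes_stochCharMatrix (Q : Matrix (Fin n) (Fin n) ℕ) (i j : Fin n) :
    Majorizes (stochCharMajorant n M Q i j) (stochCharMatrix n M Q i j) := by
  intro k
  rcases k with _ | _ | k <;> by_cases hij : i = j <;>
    simp [stochCharMatrix, stochCharMajorant, hij, coeff_X]

theorem coeff_stochCharMajorant_nonneg (Q : Matrix (Fin n) (Fin n) ℕ) (i j : Fin n) (k : ℕ) :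
    0 ≤ (stochCharMajorant n M Q i j).coeff k :=
  (majorizes_stochCharMatrix Q i j).coeff_nonneg k

variable {Q : Matrix (Fin n) (Fin n) ℕ}

theorem sum_stochCharMajorant (hQ : ∀ a, ∑ b, Q a b = M) (i : Fin n) :
    ∑ j, stochCharMajorant n M Q i j = C (M : ℤ) * (1 + X) := by
  simp [stochCharMajorant, sum_add_distrib, ← sum_mul, ← Nat.cast_sum, hQ]
  ring

theorem majorizes_sum_stochCharMajorant (hQ : ∀ a, ∑ b, Q a b = M) (i : Fin n) :
    Majorizes (C (M : ℤ) * (1 + X)) (∑ j, stochCharMajorant n M Q i j) := by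
  rw [sum_stochCharMajorant hQ]
  exact Majorizes.refl fun k => by rcases k with _ | _ | k <;> simp [coeff_X, coeff_one]

end

section

variable {m M : ℕ} {Q : Matrix (Fin (m + 1)) (Fin (m + 1)) ℕ}

theorem majorizes_det_stochCharMatrix (hQ : ∀ a, ∑ b, Q a b = M) :
    Majorizes ((C (M : ℤ) * (1 + X)) ^ (m + 1)) (stochCharMatrix (m + 1) M Q).det := by
  simpa using Matrix.majorizes_det_of_row_sum (majorizes_stochCharMatrix Q)
    (majorizes_sum_stochCharMajorant hQ)

theorem majorizes_cofactor_stochCharMatrix (hQ : ∀ a, ∑ b, Q a b = M) (j i : Fin (m + 1)) :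
    Majorizes ((C (M : ℤ) * (1 + X)) ^ m) (cofactor m (stochCharMatrix (m + 1) M Q) j i) := by
  refine Majorizes.neg_one_pow_mul ?_ _
  have h := Matrix.majorizes_det_of_row_sum
    (D := (stochCharMajorant (m + 1) M Q).submatrix j.succAbove i.succAbove)
    (fun a b => majorizes_stochCharMatrix Q _ _) fun a =>
      (majorizes_sum_stochCharMajorant hQ _).sum_succAbove
        (coeff_stochCharMajorant_nonneg Q _) i
  rwa [Fintype.card_fin] at h

theorem majorizes_sum_cofactor_mul_C {W : ℕ} {r : Fin (m + 1) → ℤ} (hQ : ∀ a, ∑ b, Q a b = M)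
    (hr : ∀ j, |r j| ≤ (W : ℤ)) (i : Fin (m + 1)) :
    Majorizes (C (((m : ℤ) + 1) * W) * (C (M : ℤ) * (1 + X)) ^ m)
      (∑ j, cofactor m (stochCharMatrix (m + 1) M Q) j i * C (r j)) := by
  have h := Majorizes.sum univ fun j _ =>
    (majorizes_cofactor_stochCharMatrix hQ j i).mul_C (hr j)
  convert h using 1
  rw [sum_const, card_univ, Fintype.card_fin, nsmul_eq_mul]
  simp only [map_mul, map_add, map_one, map_natCast]
  push_cast
  ring

end

theorem stmt_6_general (m M W : ℕ)
    (Q Q' : Matrix (Fin (m + 1)) (Fin (m + 1)) ℕ)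
    (hQ : ∀ i, ∑ j, Q i j = M) (hQ' : ∀ i, ∑ j, Q' i j = M)
    (r r' : Fin (m + 1) → ℤ)
    (hr : ∀ j, |r j| ≤ (W : ℤ)) (hr' : ∀ j, |r' j| ≤ (W : ℤ))
    (i : Fin (m + 1)) (Δ : Polynomial ℤ)
    (hΔ : Δ =
      (stochCharMatrix (m + 1) M Q').det *
          (∑ j, cofactor m (stochCharMatrix (m + 1) M Q) j i * Polynomial.C (r j)) -
        (stochCharMatrix (m + 1) M Q).det *
          (∑ j, cofactor m (stochCharMatrix (m + 1) M Q') j i * Polynomial.C (r' j))) :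
    Δ.natDegree ≤ 2 * (m + 1) - 1 ∧
      ∀ k ≤ 2 * (m + 1) - 1,
        |Δ.coeff k| ≤ 2 * ((m : ℤ) + 1) * (W : ℤ) * (M : ℤ) ^ (2 * (m + 1) - 1) *
          ((2 * (m + 1) - 1).choose k : ℤ) := by
  set N := 2 * (m + 1) - 1
  have hΔ_maj : Majorizes (C (2 * ((m : ℤ) + 1) * W * (M : ℤ) ^ N) * (1 + X) ^ N) Δ := by
    have h := ((majorizes_det_stochCharMatrix hQ').mul (majorizes_sum_cofactor_mul_C hQ hr i)).sub
      ((majorizes_det_stochCharMatrix hQ).mul (majorizes_sum_cofactor_mul_C hQ' hr' i))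
    rw [hΔ]
    convert h using 1
    rw [show N = m + 1 + m by omega]
    simp only [map_mul, map_pow, map_ofNat, mul_pow, pow_add]
    ring
  refine ⟨hΔ_maj.natDegree_le.trans ?_, fun k _ => (hΔ_maj k).trans_eq ?_⟩
  · compute_degree
  · rw [coeff_C_mul, coeff_one_add_X_pow]

/-- With `n = m + 1`, `Q, Q'` row-stochastic (rows summing to `M`) matrices of
naturals, reward vectors `r, r'` bounded by `W`, and a fixed index `i`, the polynomial
`Δ(X) := det(M I - X Q') ⬝ ∑_j cof_{ji}(M I - X Q) r_j - det(M I - X Q) ⬝ ∑_j cof_{ji}(M I - X Q') r'_j`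
can be written `∑_{k=0}^{2n-1} c_k X^k` with `|c_k| ≤ 2 n W M^(2n-1) binom(2n-1, k)`. -/
theorem stmt_6 (m M W : ℕ) (hM : 0 < M) (hW : 0 < W)
    (Q Q' : Matrix (Fin (m + 1)) (Fin (m + 1)) ℕ)
    (hQ : ∀ i, ∑ j, Q i j = M) (hQ' : ∀ i, ∑ j, Q' i j = M)
    (r r' : Fin (m + 1) → ℤ)
    (hr : ∀ j, |r j| ≤ (W : ℤ)) (hr' : ∀ j, |r' j| ≤ (W : ℤ))
    (i : Fin (m + 1)) (Δ : Polynomial ℤ)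
    (hΔ : Δ =
      (stochCharMatrix (m + 1) M Q').det *
          (∑ j, cofactor m (stochCharMatrix (m + 1) M Q) j i * Polynomial.C (r j)) -
        (stochCharMatrix (m + 1) M Q).det *
          (∑ j, cofactor m (stochCharMatrix (m + 1) M Q') j i * Polynomial.C (r' j))) :
    Δ.natDegree ≤ 2 * (m + 1) - 1 ∧
      ∀ k ≤ 2 * (m + 1) - 1,
        |Δ.coeff k| ≤ 2 * ((m : ℤ) + 1) * (W : ℤ) * (M : ℤ) ^ (2 * (m + 1) - 1) *
          ((2 * (m + 1) - 1).choose k : ℤ) :=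
  stmt_6_general m M W Q Q' hQ hQ' r r' hr hr' i Δ hΔ
end

section
/- Let n, W, M be positive integers and let \Delta(\alpha) = \sum_{k=0}^{2n-1} c_k \alpha^k be a nonzero polynomial with integer coefficients satisfying |c_k| \leq 2 n W M^{2n-1} \binom{2n-1}{k} for all k. Write \Delta(1-\epsilon) = \sum_{i=0}^{2n-1} (-1)^i g_i \epsilon^i, where g_i = \sum_{k=i}^{2n-1} c_k \binom{k}{i}, and let j be the smallest index such that g_j \neq 0. Then the polynomial \epsilon \mapsto \Delta(1-\epsilon) has no real zero in the open interval (0, \, 2^{j-1}/(n W (2M)^{2n-1} \binom{2n-1}{j+1})). -/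
/-!
Expanding at `1`, `Δ(1 - ε) = ∑ᵢ (-ε)ⁱ gᵢ` with `gᵢ = ∑ₖ cₖ C(k, i)`. The coefficient
bound `|cₖ| ≤ B C(m, k)` and `∑ₖ C(m, k) C(k, i) = C(m, i) 2^(m-i)` give
`|gᵢ| ≤ B C(m, i) 2^(m-i)`, and `C(m, j+1+t) ≤ C(m, j+1) mᵗ` makes these bounds decay
geometrically with ratio `m/2` past `j + 1`. For `ε` below the stated bound, which is `1/(2P)`
with `P = B C(m, j+1) 2^(m-j-1)`, the terms of index `> j` sum to at most
`2 P ε^(j+1) < ε^j ≤ |gⱼ| ε^j`, since `gⱼ` is a nonzero integer; so the lowest term cannot be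
cancelled.
-/

open Finset Polynomial

namespace Nat

theorem sum_Icc_choose_mul_choose (m i : ℕ) :
    ∑ k ∈ Icc i m, m.choose k * k.choose i = m.choose i * 2 ^ (m - i) := by
  rcases lt_or_ge m i with him | him
  · simp [Icc_eq_empty_of_lt him, choose_eq_zero_of_lt him]
  calc ∑ k ∈ Icc i m, m.choose k * k.choose i
      = m.choose i * ∑ k ∈ Ico i (m + 1), (m - i).choose (k - i) := by
        rw [mul_sum, ← Ico_add_one_right_eq_Icc]
        exact sum_congr rfl fun k hk => choose_mul (mem_Ico.1 hk).1
    _ = m.choose i * 2 ^ (m - i) := by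
        rw [sum_Ico_eq_sum_range, ← sum_range_choose (m - i)]
        simp only [Nat.add_sub_cancel_left, show m + 1 - i = m - i + 1 by omega]

theorem choose_add_le_choose_mul_pow (m a t : ℕ) : m.choose (a + t) ≤ m.choose a * m ^ t := by
  induction t with
  | zero => simp
  | succ t ih =>
    calc m.choose (a + t + 1) ≤ m.choose (a + t + 1) * (a + t + 1) :=
          Nat.le_mul_of_pos_right _ (by omega)
      _ = m.choose (a + t) * (m - (a + t)) := choose_succ_right_eq m (a + t)
      _ ≤ m.choose a * m ^ t * m := Nat.mul_le_mul ih (Nat.sub_le _ _)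
      _ = m.choose a * m ^ (t + 1) := by rw [pow_succ, Nat.mul_assoc]

end Nat

section OrderedRing

variable {R : Type*} [CommRing R] [LinearOrder R] [IsStrictOrderedRing R]

theorem Polynomial.natDegree_le_of_abs_coeff_le_mul_choose {p : R[X]} {B : R} {m : ℕ}
    (h : ∀ k, |p.coeff k| ≤ B * m.choose k) : p.natDegree ≤ m :=
  natDegree_le_iff_coeff_eq_zero.2 fun k hk =>
    abs_nonpos_iff.1 (by simpa [Nat.choose_eq_zero_of_lt hk] using h k)

theorem abs_sum_Icc_mul_choose_le {c : ℕ → R} {B : R} {m : ℕ}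
    (hc : ∀ k, |c k| ≤ B * m.choose k) (i : ℕ) :
    |∑ k ∈ Icc i m, c k * k.choose i| ≤ B * (m.choose i * 2 ^ (m - i)) :=
  calc |∑ k ∈ Icc i m, c k * k.choose i|
      ≤ ∑ k ∈ Icc i m, B * m.choose k * k.choose i :=
        (abs_sum_le_sum_abs _ _).trans <| sum_le_sum fun k _ => by
          rw [abs_mul, Nat.abs_cast]
          exact mul_le_mul_of_nonneg_right (hc k) (Nat.cast_nonneg _)
    _ = B * (m.choose i * 2 ^ (m - i)) := by
        simp_rw [mul_assoc, ← mul_sum]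
        exact_mod_cast
          congrArg (fun s : ℕ => B * (s : R)) (Nat.sum_Icc_choose_mul_choose m i)

theorem sum_range_pow_mul_ne_zero_of_abs_tail_lt {g : ℕ → R} {x : R} {j N : ℕ} (hjN : j < N)
    (hlow : ∀ i < j, g i = 0)
    (htail : ∑ i ∈ Ico (j + 1) N, |x| ^ i * |g i| < |x| ^ j * |g j|) :
    ∑ i ∈ range N, x ^ i * g i ≠ 0 := by
  have hsplit :
      ∑ i ∈ range N, x ^ i * g i = x ^ j * g j + ∑ i ∈ Ico (j + 1) N, x ^ i * g i := by
    rw [range_eq_Ico, ← sum_Ico_consecutive _ (Nat.zero_le j) hjN.le, sum_eq_sum_Ico_succ_bot hjN,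
      sum_eq_zero fun i hi => by rw [hlow i (mem_Ico.1 hi).2, mul_zero], zero_add]
  have hbound : |∑ i ∈ Ico (j + 1) N, x ^ i * g i| < |x ^ j * g j| :=
    calc _ ≤ ∑ i ∈ Ico (j + 1) N, |x| ^ i * |g i| :=
          (abs_sum_le_sum_abs _ _).trans_eq (by simp only [abs_mul, abs_pow])
      _ < _ := by rwa [abs_mul, abs_pow]
  rw [hsplit]
  intro h
  rw [eq_neg_of_add_eq_zero_left h, abs_neg] at hbound
  exact lt_irrefl _ hbound

end OrderedRing

theorem Polynomial.aeval_one_add_eq_sum {R S : Type*} [CommSemiring R] [CommSemiring S]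
    [Algebra R S] {p : R[X]} {m : ℕ} (hp : p.natDegree ≤ m) (x : S) :
    aeval (1 + x) p = ∑ i ∈ range (m + 1),
      x ^ i * algebraMap R S (∑ k ∈ Icc i m, p.coeff k * k.choose i) := by
  rw [aeval_eq_sum_range' (Nat.lt_succ_of_le hp)]
  calc ∑ k ∈ range (m + 1), p.coeff k • (1 + x) ^ k
      = ∑ k ∈ range (m + 1), ∑ i ∈ range (k + 1),
          x ^ i * algebraMap R S (p.coeff k * k.choose i) := by
        refine sum_congr rfl fun k _ => ?_
        rw [add_comm, add_pow, Algebra.smul_def, mul_sum]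
        refine sum_congr rfl fun i _ => ?_
        simp only [one_pow, mul_one, map_mul, map_natCast]
        ring
    _ = _ := by
        simp_rw [map_sum, mul_sum]
        exact sum_comm' fun k i => by simp only [mem_range, mem_Icc]; omega

theorem choose_mul_two_pow_le {K : Type*} [Field K] [LinearOrder K] [IsStrictOrderedRing K]
    {m a i : ℕ} (hai : a ≤ i) :
    (m.choose i : K) * 2 ^ (m - i) ≤ m.choose a * 2 ^ (m - a) * (m / 2) ^ (i - a) := by
  rcases lt_or_ge m i with him | him
  · rw [Nat.choose_eq_zero_of_lt him, Nat.cast_zero, zero_mul]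
    positivity
  obtain ⟨t, rfl⟩ := Nat.exists_eq_add_of_le hai
  have h2 : (2 : K) ^ (m - a) = 2 ^ (m - (a + t)) * 2 ^ t := by
    rw [← pow_add]; congr 1; omega
  rw [h2, Nat.add_sub_cancel_left, div_pow]
  calc (m.choose (a + t) : K) * 2 ^ (m - (a + t)) ≤ m.choose a * m ^ t * 2 ^ (m - (a + t)) := by
        gcongr; exact_mod_cast Nat.choose_add_le_choose_mul_pow m a t
    _ = _ := by field_simp

theorem sum_Ico_pow_mul_abs_le_of_abs_le_geom {g : ℕ → ℝ} {x P q : ℝ} {a N : ℕ} (hx : 0 ≤ x)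
    (hq : 0 ≤ q) (hqx : q * x ≤ 1 / 2) (hP : 0 ≤ P)
    (hg : ∀ i ∈ Ico a N, |g i| ≤ P * q ^ (i - a)) :
    ∑ i ∈ Ico a N, x ^ i * |g i| ≤ 2 * P * x ^ a :=
  calc ∑ i ∈ Ico a N, x ^ i * |g i|
      ≤ ∑ i ∈ Ico a N, P * x ^ a * (q * x) ^ (i - a) := sum_le_sum fun i hi => by
        calc x ^ i * |g i| ≤ x ^ (a + (i - a)) * (P * q ^ (i - a)) := by
              rw [Nat.add_sub_cancel' (mem_Ico.1 hi).1]; gcongr; exact hg i hi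
          _ = _ := by ring
    _ = P * x ^ a * ∑ k ∈ range (N - a), (q * x) ^ k := by
        rw [← mul_sum, sum_Ico_eq_sum_range]; simp only [Nat.add_sub_cancel_left]
    _ ≤ P * x ^ a * 2 := by
        gcongr
        exact (sum_le_sum fun k _ => pow_le_pow_left₀ (by positivity) hqx k).trans
          (sum_geometric_two_le _)
    _ = 2 * P * x ^ a := by ring

theorem sum_range_pow_mul_ne_zero_of_abs_coeff_le_mul_choose {c g : ℕ → ℝ} {B x : ℝ}
    {m j : ℕ} (hc : ∀ k, |c k| ≤ B * m.choose k)
    (hg : ∀ i, g i = ∑ k ∈ Icc i m, c k * k.choose i)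
    (hlow : ∀ i < j, g i = 0) (hgj : 1 ≤ |g j|) (hx : x ≠ 0)
    (hPx : B * m.choose (j + 1) * 2 ^ (m - (j + 1)) * |x| < 1 / 2) (hmx : m * |x| ≤ 1) :
    ∑ i ∈ range (m + 1), x ^ i * g i ≠ 0 := by
  set P := B * m.choose (j + 1) * 2 ^ (m - (j + 1))
  have hB : 0 ≤ B := by simpa using (abs_nonneg (c 0)).trans (hc 0)
  have hjm : j ≤ m := by
    by_contra! h
    norm_num [hg, Icc_eq_empty_of_lt h] at hgj
  have hg_tail : ∀ i ∈ Ico (j + 1) (m + 1), |g i| ≤ P * (m / 2) ^ (i - (j + 1)) := fun i hi =>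
    calc |g i| ≤ B * (m.choose i * 2 ^ (m - i)) := hg i ▸ abs_sum_Icc_mul_choose_le hc i
      _ ≤ B * (m.choose (j + 1) * 2 ^ (m - (j + 1)) * (m / 2) ^ (i - (j + 1))) :=
          mul_le_mul_of_nonneg_left (choose_mul_two_pow_le (mem_Ico.1 hi).1) hB
      _ = _ := by ring
  have hx0 : 0 < |x| := abs_pos.2 hx
  refine sum_range_pow_mul_ne_zero_of_abs_tail_lt (Nat.lt_succ_of_le hjm) hlow ?_
  calc _ ≤ 2 * P * |x| ^ (j + 1) :=
        sum_Ico_pow_mul_abs_le_of_abs_le_geom hx0.le (by positivity) (by linarith) (by positivity)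
          hg_tail
    _ < |x| ^ j := by rw [pow_succ]; nlinarith [pow_pos hx0 j]
    _ ≤ |x| ^ j * |g j| := le_mul_of_one_le_right (by positivity) hgj

theorem le_two_mul_mul_pow_mul_choose_mul_two_pow {n W M m j : ℕ} (hm : m ≤ 2 * n)
    (hD : 0 < n * W * (2 * M) ^ m * m.choose (j + 1)) :
    m ≤ 2 * n * W * M ^ m * m.choose (j + 1) * 2 ^ (m - (j + 1)) := by
  have hX : 0 < W * M ^ m * m.choose (j + 1) * 2 ^ (m - (j + 1)) := by
    simp only [CanonicallyOrderedAdd.mul_pos, mul_pow, pow_pos, Nat.ofNat_pos] at hD ⊢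
    tauto
  calc m ≤ 2 * n * 1 := by omega
    _ ≤ 2 * n * (W * M ^ m * m.choose (j + 1) * 2 ^ (m - (j + 1))) :=
        Nat.mul_le_mul_left _ hX
    _ = _ := by ring

theorem two_zpow_sub_one_div_eq (n W M : ℕ) {m j : ℕ} (hjm : j + 1 ≤ m) :
    (2 : ℝ) ^ ((j : ℤ) - 1) / (n * W * (2 * M) ^ m * m.choose (j + 1)) =
      1 / (2 * (2 * n * W * M ^ m * m.choose (j + 1) * 2 ^ (m - (j + 1)))) := by
  have h2m : (2 : ℝ) ^ m = 2 ^ (m - (j + 1)) * 2 ^ (j + 1) := by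
    rw [← pow_add, Nat.sub_add_cancel hjm]
  have h2j : (2 : ℝ) ^ ((j : ℤ) - 1) = 2 ^ (j + 1) / 4 := by
    rw [zpow_sub₀ two_ne_zero, zpow_natCast, zpow_one]; ring
  rw [h2j, mul_pow, h2m, div_div, one_div]
  convert div_mul_cancel_right₀ (pow_ne_zero (j + 1) (two_ne_zero' ℝ))
    (2 * (2 * n * W * M ^ m * m.choose (j + 1) * 2 ^ (m - (j + 1)))) using 2
  ring

theorem stmt_8_general (n W M : ℕ)
    (Δ : Polynomial ℤ)
    (hcoeff : ∀ k, |Δ.coeff k| ≤ 2 * (n : ℤ) * (W : ℤ) * (M : ℤ) ^ (2 * n - 1) *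
      ((2 * n - 1).choose k : ℤ))
    (g : ℕ → ℤ)
    (hg : ∀ i, g i = ∑ k ∈ Finset.Icc i (2 * n - 1), Δ.coeff k * (k.choose i : ℤ))
    (j : ℕ) (hlow : ∀ i, i < j → g i = 0) (hgj : g j ≠ 0) :
    ∀ ε : ℝ, 0 < ε →
      ε < (2 : ℝ) ^ ((j : ℤ) - 1) /
        ((n : ℝ) * (W : ℝ) * (2 * (M : ℝ)) ^ (2 * n - 1) * ((2 * n - 1).choose (j + 1) : ℝ)) →
      Polynomial.aeval (1 - ε) Δ ≠ 0 := by
  intro ε hε hεlt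
  set m := 2 * n - 1
  -- a zero denominator makes the bound `0` (as `x / 0 = 0`), leaving no admissible `ε`
  have hD : 0 < n * W * (2 * M) ^ m * m.choose (j + 1) := by
    refine Nat.pos_of_ne_zero fun h => ?_
    have h' : ((n * W * (2 * M) ^ m * m.choose (j + 1) : ℕ) : ℝ) = 0 := by rw [h, Nat.cast_zero]
    push_cast at h'
    rw [h', div_zero] at hεlt
    linarith
  have hjm : j + 1 ≤ m := by
    by_contra h
    simp [Nat.choose_eq_zero_of_lt (not_le.1 h)] at hD
  have hmP : (m : ℝ) ≤ 2 * n * W * M ^ m * m.choose (j + 1) * 2 ^ (m - (j + 1)) := by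
    exact_mod_cast le_two_mul_mul_pow_mul_choose_mul_two_pow (by omega) hD
  have hm : (1 : ℝ) ≤ m := Nat.one_le_cast.2 (by omega)
  rw [two_zpow_sub_one_div_eq n W M hjm, lt_div_iff₀ (by linarith)] at hεlt
  rw [sub_eq_add_neg, aeval_one_add_eq_sum (natDegree_le_of_abs_coeff_le_mul_choose hcoeff)]
  simp only [← hg, eq_intCast]
  refine sum_range_pow_mul_ne_zero_of_abs_coeff_le_mul_choose (c := fun k => (Δ.coeff k : ℝ))
    (B := 2 * n * W * M ^ m) (fun k => by exact_mod_cast hcoeff k)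
    (fun i => by rw [hg]; push_cast; rfl) (fun i hi => by simp [hlow i hi])
    (by exact_mod_cast Int.one_le_abs hgj) (neg_ne_zero.2 hε.ne') ?_ ?_ <;>
    rw [abs_neg, abs_of_pos hε] <;> nlinarith

/-- Let `Δ = ∑_{k=0}^{2n-1} c_k α^k` be a nonzero integer polynomial with
`|c_k| ≤ 2 n W M^(2n-1) binom(2n-1, k)` for all `k`. Writing `Δ(1-ε) = ∑ (-1)^i g_i ε^i`
with `g_i = ∑_{k=i}^{2n-1} c_k binom(k, i)`, if `j` is the smallest index with `g_j ≠ 0`,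
then `ε ↦ Δ(1-ε)` has no real zero in `(0, 2^(j-1)/(n W (2M)^(2n-1) binom(2n-1, j+1)))`. -/
theorem stmt_8 (n W M : ℕ) (hn : 0 < n) (hW : 0 < W) (hM : 0 < M)
    (Δ : Polynomial ℤ) (hΔ : Δ ≠ 0) (hdeg : Δ.natDegree ≤ 2 * n - 1)
    (hcoeff : ∀ k, |Δ.coeff k| ≤ 2 * (n : ℤ) * (W : ℤ) * (M : ℤ) ^ (2 * n - 1) *
      ((2 * n - 1).choose k : ℤ))
    (g : ℕ → ℤ)
    (hg : ∀ i, g i = ∑ k ∈ Finset.Icc i (2 * n - 1), Δ.coeff k * (k.choose i : ℤ))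
    (j : ℕ) (hlow : ∀ i, i < j → g i = 0) (hgj : g j ≠ 0) :
    ∀ ε : ℝ, 0 < ε →
      ε < (2 : ℝ) ^ ((j : ℤ) - 1) /
        ((n : ℝ) * (W : ℝ) * (2 * (M : ℝ)) ^ (2 * n - 1) * ((2 * n - 1).choose (j + 1) : ℝ)) →
      Polynomial.aeval (1 - ε) Δ ≠ 0 :=
  stmt_8_general n W M Δ hcoeff g hg j hlow hgj
end

section
/- For every positive integer n and every integer j with 0 \leq j \leq 2n-2, the real number 2^{j-1}/\binom{2n-1}{j+1} is at least 2^{\lfloor 2n/3 \rfloor - 2}/\binom{2n-1}{\lfloor 2n/3 \rfloor}; that is, the function j \mapsto 2^{j-1}/\binom{2n-1}{j+1} on \{0,\dots,2n-2\} attains its minimum at j = \lfloor 2n/3 \rfloor - 1. -/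
noncomputable def Faux (n j : ℕ) : ℝ := 2 ^ ((j : ℤ) - 1) / ((2 * n - 1).choose (j + 1) : ℝ)

lemma natA (n j : ℕ) (h : 3 * j + 6 ≤ 2 * n) :
    2 * (2 * n - 1).choose (j + 1) ≤ (2 * n - 1).choose (j + 2) := by
  have key := Nat.choose_succ_right_eq (2 * n - 1) (j + 1)
  have h1 : 2 * (j + 2) ≤ 2 * n - 1 - (j + 1) := by omega
  have h2 : (2 * n - 1).choose (j + 1) * (2 * (j + 2)) ≤ (2 * n - 1).choose (j + 2) * (j + 2) := by
    rw [key]; exact Nat.mul_le_mul_left _ h1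
  have h3 : (2 * (2 * n - 1).choose (j + 1)) * (j + 2) ≤ (2 * n - 1).choose (j + 2) * (j + 2) := by
    calc (2 * (2 * n - 1).choose (j + 1)) * (j + 2)
        = (2 * n - 1).choose (j + 1) * (2 * (j + 2)) := by ring
      _ ≤ _ := h2
  exact Nat.le_of_mul_le_mul_right h3 (by omega)

lemma natB (n j : ℕ) (h : 2 * n ≤ 3 * j + 6) :
    (2 * n - 1).choose (j + 2) ≤ 2 * (2 * n - 1).choose (j + 1) := by
  have key := Nat.choose_succ_right_eq (2 * n - 1) (j + 1)
  have h1 : 2 * n - 1 - (j + 1) ≤ 2 * (j + 2) := by omega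
  have h2 : (2 * n - 1).choose (j + 2) * (j + 2) ≤ (2 * n - 1).choose (j + 1) * (2 * (j + 2)) := by
    rw [key]; exact Nat.mul_le_mul_left _ h1
  have h3 : (2 * n - 1).choose (j + 2) * (j + 2) ≤ (2 * (2 * n - 1).choose (j + 1)) * (j + 2) := by
    calc (2 * n - 1).choose (j + 2) * (j + 2) ≤ (2 * n - 1).choose (j + 1) * (2 * (j + 2)) := h2
      _ = (2 * (2 * n - 1).choose (j + 1)) * (j + 2) := by ring
  exact Nat.le_of_mul_le_mul_right h3 (by omega)

lemma stepA (n j : ℕ) (h : 3 * j + 6 ≤ 2 * n) : Faux n (j + 1) ≤ Faux n j := by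
  have ha : 0 < (2 * n - 1).choose (j + 1) := Nat.choose_pos (by omega)
  have hb : 0 < (2 * n - 1).choose (j + 2) := Nat.choose_pos (by omega)
  have hA := natA n j h
  unfold Faux
  rw [div_le_div_iff₀ (by exact_mod_cast hb) (by exact_mod_cast ha)]
  have he : ((j + 1 : ℕ) : ℤ) - 1 = ((j : ℤ) - 1) + 1 := by push_cast; ring
  rw [he, zpow_add_one₀ (by norm_num : (2:ℝ) ≠ 0)]
  have hp : (0:ℝ) < 2 ^ ((j:ℤ) - 1) := zpow_pos (by norm_num) _
  have hcast : (2 * (2 * n - 1).choose (j + 1) : ℝ) ≤ ((2 * n - 1).choose (j + 2) : ℝ) := by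
    exact_mod_cast hA
  push_cast at hcast ⊢
  nlinarith [hcast, hp]

lemma stepB (n j : ℕ) (h : 2 * n ≤ 3 * j + 6) (h2 : j + 2 ≤ 2 * n - 1) :
    Faux n j ≤ Faux n (j + 1) := by
  have ha : 0 < (2 * n - 1).choose (j + 1) := Nat.choose_pos (by omega)
  have hb : 0 < (2 * n - 1).choose (j + 2) := Nat.choose_pos h2
  have hB := natB n j h
  unfold Faux
  rw [div_le_div_iff₀ (by exact_mod_cast ha) (by exact_mod_cast hb)]
  have he : ((j + 1 : ℕ) : ℤ) - 1 = ((j : ℤ) - 1) + 1 := by push_cast; ring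
  rw [he, zpow_add_one₀ (by norm_num : (2:ℝ) ≠ 0)]
  have hp : (0:ℝ) < 2 ^ ((j:ℤ) - 1) := zpow_pos (by norm_num) _
  have hcast : ((2 * n - 1).choose (j + 2) : ℝ) ≤ (2 * (2 * n - 1).choose (j + 1) : ℝ) := by
    exact_mod_cast hB
  push_cast at hcast ⊢
  nlinarith [hcast, hp]

lemma down (n : ℕ) (k : ℕ) (hk : k ≤ 2 * n / 3 - 1) :
    Faux n (2 * n / 3 - 1) ≤ Faux n (2 * n / 3 - 1 - k) := by
  set m := 2 * n / 3 with hm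
  induction k with
  | zero => simp
  | succ k ih =>
    have hk' : k ≤ m - 1 := by omega
    have ih' := ih hk'
    have hstep : Faux n (m - 1 - k) ≤ Faux n (m - 1 - (k + 1)) := by
      have hj : m - 1 - (k + 1) + 1 = m - 1 - k := by omega
      have h3 : 3 * (m - 1 - (k + 1)) + 6 ≤ 2 * n := by omega
      have := stepA n (m - 1 - (k + 1)) h3
      rwa [hj] at this
    exact le_trans ih' hstep

lemma up (n : ℕ) (k : ℕ) (hk : 2 * n / 3 - 1 + k ≤ 2 * n - 2) :
    Faux n (2 * n / 3 - 1) ≤ Faux n (2 * n / 3 - 1 + k) := by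
  set m := 2 * n / 3 with hm
  induction k with
  | zero => simp
  | succ k ih =>
    have hk' : m - 1 + k ≤ 2 * n - 2 := by omega
    have ih' := ih hk'
    have hstep : Faux n (m - 1 + k) ≤ Faux n (m - 1 + (k + 1)) := by
      have h3 : 2 * n ≤ 3 * (m - 1 + k) + 6 := by omega
      have h2 : (m - 1 + k) + 2 ≤ 2 * n - 1 := by omega
      have := stepB n (m - 1 + k) h3 h2
      have hj : m - 1 + k + 1 = m - 1 + (k + 1) := by omega
      rwa [hj] at this
    exact le_trans ih' hstep

/-- For every positive integer `n` and every `j` with `0 ≤ j ≤ 2n-2`,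
`2^(j-1)/binom(2n-1, j+1) ≥ 2^(⌊2n/3⌋-2)/binom(2n-1, ⌊2n/3⌋)`; that is, the function
`j ↦ 2^(j-1)/binom(2n-1, j+1)` on `{0, …, 2n-2}` attains its minimum at `j = ⌊2n/3⌋ - 1`. -/
theorem stmt_9 (n : ℕ) (hn : 0 < n) (j : ℕ) (hj : j ≤ 2 * n - 2) :
    (2 : ℝ) ^ ((j : ℤ) - 1) / ((2 * n - 1).choose (j + 1) : ℝ)
      ≥ (2 : ℝ) ^ (((2 * n / 3 : ℕ) : ℤ) - 2) / ((2 * n - 1).choose (2 * n / 3) : ℝ) := by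
  set m := 2 * n / 3 with hm
  by_cases hm0 : m = 0
  · -- then 2n < 3, n = 1, j = 0
    have hn1 : n = 1 := by omega
    subst hn1
    interval_cases j
    · simp [hm0]
      norm_num
  · have hm1 : 1 ≤ m := by omega
    have hrhs : (2 : ℝ) ^ ((m : ℤ) - 2) / ((2 * n - 1).choose m : ℝ) = Faux n (m - 1) := by
      unfold Faux
      congr 2
      · push_cast [hm1]; ring
      · congr 1; omega
    rw [hrhs]
    have hlhs : (2 : ℝ) ^ ((j : ℤ) - 1) / ((2 * n - 1).choose (j + 1) : ℝ) = Faux n j := rfl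
    rw [hlhs, ge_iff_le]
    rcases le_or_gt j (m - 1) with hc | hc
    · have := down n (m - 1 - j) (by omega)
      have hj' : m - 1 - (m - 1 - j) = j := by omega
      rwa [hj'] at this
    · have := up n (j - (m - 1)) (by omega)
      have hj' : m - 1 + (j - (m - 1)) = j := by omega
      rwa [hj'] at this
end

section
/- (Landau's bound) For every nonzero polynomial P(x) = \sum_{k=0}^{d} c_k x^k with complex coefficients, the Mahler measure satisfies M(P) \leq \sqrt{\sum_{k=0}^{d} |c_k|^2}. -/
open Polynomial

/-- The Mahler measure of a complex polynomial `P`: the absolute value of its leading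
coefficient times the product of `max 1 |z|` over its complex roots `z` (with multiplicity). -/
noncomputable def mahlerMeasureC (P : Polynomial ℂ) : ℝ :=
  ‖P.leadingCoeff‖ * (P.roots.map fun z => max 1 ‖z‖).prod

theorem mahlerMeasureC_eq_mahlerMeasure (P : ℂ[X]) : mahlerMeasureC P = P.mahlerMeasure :=
  (mahlerMeasure_eq_leadingCoeff_mul_prod_roots P).symm

theorem sum_support_sq_norm_coeff_eq_sum_range {d : ℕ} (P : ℂ[X]) (hd : P.natDegree ≤ d) :
    ∑ k ∈ P.support, ‖P.coeff k‖ ^ 2 = ∑ k ∈ Finset.range (d + 1), ‖P.coeff k‖ ^ 2 := by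
  rw [← sum_def (f := fun _ a => ‖a‖ ^ 2)]
  exact sum_over_range' P (by simp) (d + 1) (Nat.lt_succ_of_le hd)

theorem stmt_13_general (d : ℕ) (P : Polynomial ℂ) (hd : P.natDegree ≤ d) :
    mahlerMeasureC P ≤ Real.sqrt (∑ k ∈ Finset.range (d + 1), ‖P.coeff k‖ ^ 2) := by
  rw [mahlerMeasureC_eq_mahlerMeasure, ← sum_support_sq_norm_coeff_eq_sum_range P hd]
  exact mahlerMeasure_le_sqrt_sum_sq_norm_coeff P

/-- Landau's bound: For every nonzero complex polynomial
`P = ∑_{k=0}^d c_k x^k`, the Mahler measure satisfies `M(P) ≤ √(∑_{k=0}^d |c_k|²)`. -/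
theorem stmt_13 (d : ℕ) (P : Polynomial ℂ) (hP : P ≠ 0) (hd : P.natDegree ≤ d) :
    mahlerMeasureC P ≤ Real.sqrt (∑ k ∈ Finset.range (d + 1), ‖P.coeff k‖ ^ 2) :=
  stmt_13_general d P hd
end

section
/- Let n and W be positive integers and let \Delta be a nonzero polynomial with integer coefficients of degree at most 2n-1 whose coefficients all have absolute value at most 12W. Then \Delta has no real root in the open interval (1 - 1/(24W \binom{2n}{n}), \, 1). -/
open Polynomial Finset

private lemma hockey (m D : ℕ) :
    ∑ j ∈ range (D+1), (m+j).choose m = (m+D+1).choose (m+1) := by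
  induction D with
  | zero => simp
  | succ D ih =>
      rw [Finset.sum_range_succ, ih, show m + (D+1) = m + D + 1 by ring,
        show m + D + 1 + 1 = (m + D + 1) + 1 from rfl,
        Nat.choose_succ_succ (m + D + 1) m]
      simp only [Nat.succ_eq_add_one]
      omega

private lemma aux_sum2 (m D : ℕ) :
    ∑ j ∈ range (D+1), (D - j) * (m+j).choose m = (D+m+1).choose (m+2) := by
  induction D with
  | zero => simp [Nat.choose_eq_zero_of_lt]
  | succ D ih =>
      rw [Finset.sum_range_succ]
      have : ∀ j ∈ range (D+1), (D + 1 - j) * (m+j).choose m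
          = (D - j) * (m+j).choose m + (m+j).choose m := by
        intro j hj
        have : j ≤ D := by simpa [Nat.lt_succ_iff] using hj
        rw [show D + 1 - j = (D - j) + 1 by omega, add_mul, one_mul]
      rw [Finset.sum_congr rfl this, Finset.sum_add_distrib, ih, hockey,
        show D + 1 + m + 1 = (D + m + 1) + 1 by ring,
        Nat.choose_succ_succ (D + m + 1) (m + 1)]
      simp only [Nat.succ_eq_add_one, Nat.sub_self, Nat.zero_mul]
      rw [show m + D + 1 = D + m + 1 by ring, show m + 1 + 1 = m + 2 by omega]
      omega

private lemma aux_sum (m D : ℕ) :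
    ∑ k ∈ range (D+1), k * (D + m - k).choose m = (D+m+1).choose (m+2) := by
  rw [← Finset.sum_range_reflect]
  rw [← aux_sum2 m D]
  apply Finset.sum_congr rfl
  intro j hj
  have hjD : j ≤ D := by simpa [Nat.lt_succ_iff] using hj
  have h1 : D + 1 - 1 - j = D - j := by omega
  have h2 : D + m - (D - j) = m + j := by omega
  rw [h1, h2]

private lemma pow_bound (x : ℝ) (hx0 : 0 ≤ x) (hx1 : x ≤ 1) (k : ℕ) :
    1 - x ^ k ≤ k * (1 - x) := by
  induction k with
  | zero => simp
  | succ k ih =>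
      have h1 : x ^ k ≤ 1 := pow_le_one₀ hx0 hx1
      have h2 : 0 ≤ x ^ k := pow_nonneg hx0 k
      rw [pow_succ]
      push_cast
      nlinarith [mul_nonneg (by linarith : (0:ℝ) ≤ 1 - x) (by linarith : (0:ℝ) ≤ 1 - x ^ k)]

private lemma key (n W : ℕ) (hn : 0 < n) (hW : 0 < W) (x : ℝ)
    (hx1 : 1 - 1 / (24 * (W : ℝ) * ((2 * n).choose n : ℝ)) < x) (hx2 : x < 1) :
    ∀ D, D ≤ 2*n - 1 → ∀ g : Polynomial ℤ, g ≠ 0 → g.natDegree ≤ D →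
      (∀ k, |g.coeff k| ≤ 12 * (W:ℤ) * ((2*n-1-k).choose (2*n-1-D) : ℤ)) →
      Polynomial.aeval x g ≠ 0 := by
  -- positivity facts
  have hC : (0:ℝ) < ((2 * n).choose n : ℝ) := by
    exact_mod_cast Nat.choose_pos (by omega)
  have hW' : (1:ℝ) ≤ (W:ℝ) := by exact_mod_cast hW
  have h24 : (0:ℝ) < 24 * (W : ℝ) * ((2 * n).choose n : ℝ) := by positivity
  have hx0 : 0 ≤ x := by
    have h1 : 1 / (24 * (W : ℝ) * ((2 * n).choose n : ℝ)) ≤ 1 := by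
      rw [div_le_one h24]
      have : (1:ℝ) ≤ ((2 * n).choose n : ℝ) := by
        exact_mod_cast Nat.succ_le_of_lt (Nat.choose_pos (by omega : n ≤ 2*n))
      nlinarith
    linarith
  intro D
  induction D using Nat.strong_induction_on with
  | _ D IH =>
    intro hD2n g hg0 hgdeg hgcoeff
    by_cases hg1 : g.eval 1 = 0
    · -- factor out (X - 1)
      obtain ⟨h, hgh⟩ := (dvd_iff_isRoot (a := (1:ℤ))).mpr hg1
      have hh0 : h ≠ 0 := by
        rintro rfl
        rw [mul_zero] at hgh
        exact hg0 hgh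
      have hXC : (X - C (1:ℤ)) ≠ 0 := X_sub_C_ne_zero 1
      have hdeg' : g.natDegree = h.natDegree + 1 := by
        rw [hgh, natDegree_mul hXC hh0, natDegree_X_sub_C]
        ring
      have hD1 : 1 ≤ D := by omega
      -- coefficient recursion
      have hrec : ∀ k, g.coeff (k+1) = h.coeff k - h.coeff (k+1) := by
        intro k
        simp [hgh, sub_mul, coeff_X_mul]
      -- bound on coefficients of h, by downward induction
      have Hb : ∀ t k, D ≤ k + t →
          |h.coeff k| ≤ 12 * (W:ℤ) * ((2*n-1-k).choose (2*n-D) : ℤ) := by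
        intro t
        induction t with
        | zero =>
            intro k hk
            have : h.natDegree < k := by omega
            rw [coeff_eq_zero_of_natDegree_lt this]
            simp
            positivity
        | succ t iht =>
            intro k hk
            by_cases hcase : D ≤ k + t
            · exact iht k hcase
            · have hk2 : k ≤ 2*n - 2 := by omega
              have e1 : h.coeff k = g.coeff (k+1) + h.coeff (k+1) := by
                have := hrec k; omega
              have b1 := hgcoeff (k+1)
              have b2 := iht (k+1) (by omega)
              have hpascal : ((2*n-1-k).choose (2*n-D) : ℤ)
                  = ((2*n-1-(k+1)).choose (2*n-1-D) : ℤ)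
                    + ((2*n-1-(k+1)).choose (2*n-D) : ℤ) := by
                have e2 : 2*n-1-k = (2*n-1-(k+1)) + 1 := by omega
                have e3 : 2*n-D = (2*n-1-D) + 1 := by omega
                rw [e2, e3, Nat.choose_succ_succ]
                push_cast
                ring
              calc |h.coeff k| = |g.coeff (k+1) + h.coeff (k+1)| := by rw [e1]
                _ ≤ |g.coeff (k+1)| + |h.coeff (k+1)| := abs_add_le _ _
                _ ≤ 12 * (W:ℤ) * ((2*n-1-(k+1)).choose (2*n-1-D) : ℤ)
                    + 12 * (W:ℤ) * ((2*n-1-(k+1)).choose (2*n-D) : ℤ) := by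
                      exact add_le_add b1 b2
                _ = 12 * (W:ℤ) * ((2*n-1-k).choose (2*n-D) : ℤ) := by
                      rw [hpascal]; ring
      have hhb : ∀ k, |h.coeff k| ≤ 12 * (W:ℤ) * ((2*n-1-k).choose (2*n-1-(D-1)) : ℤ) := by
        intro k
        have := Hb (D+1) k (by omega)
        rwa [show 2*n-1-(D-1) = 2*n-D by omega]
      have hne : Polynomial.aeval x h ≠ 0 :=
        IH (D-1) (by omega) (by omega) h hh0 (by omega) hhb
      rw [hgh, map_mul]
      have : Polynomial.aeval x (X - C (1:ℤ)) = x - 1 := by simp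
      rw [this]
      exact mul_ne_zero (by intro hc; apply absurd hx2; linarith [sub_eq_zero.mp hc]) hne
    · -- g(1) ≠ 0 case: estimate
      intro hroot
      set m := 2*n-1-D with hm
      have hDm : D + m = 2*n-1 := by omega
      have hlt : g.natDegree < D + 1 := by omega
      have e1 : (0:ℝ) = ∑ k ∈ range (D+1), (g.coeff k : ℝ) * x ^ k := by
        rw [← hroot, aeval_eq_sum_range' hlt]
        simp [zsmul_eq_mul]
      have e2 : ((g.eval 1 : ℤ) : ℝ) = ∑ k ∈ range (D+1), (g.coeff k : ℝ) := by
        have : (Polynomial.aeval (1:ℝ) g) = ∑ k ∈ range (D+1), (g.coeff k : ℝ) := by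
          rw [aeval_eq_sum_range' hlt]
          simp [zsmul_eq_mul]
        rw [← this]
        simp [aeval_def, eval₂_at_one]
      have e3 : ((g.eval 1 : ℤ) : ℝ) = ∑ k ∈ range (D+1), (g.coeff k : ℝ) * (1 - x ^ k) := by
        rw [e2]
        rw [show (∑ k ∈ range (D+1), (g.coeff k : ℝ))
          = (∑ k ∈ range (D+1), (g.coeff k : ℝ)) - 0 by ring, e1, ← Finset.sum_sub_distrib]
        apply Finset.sum_congr rfl
        intro k _
        ring
      have hcoeffR : ∀ k, |(g.coeff k : ℝ)| ≤ 12 * (W:ℝ) * ((2*n-1-k).choose m : ℝ) := by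
        intro k
        have := hgcoeff k
        calc |(g.coeff k : ℝ)| = ((|g.coeff k| : ℤ) : ℝ) := by push_cast; ring
          _ ≤ ((12 * (W:ℤ) * ((2*n-1-k).choose m : ℤ) : ℤ) : ℝ) := by exact_mod_cast this
          _ = 12 * (W:ℝ) * ((2*n-1-k).choose m : ℝ) := by push_cast; ring
      -- bound the sum
      have hsumnat : ∑ k ∈ range (D+1), k * (2*n-1-k).choose m ≤ (2*n).choose n := by
        have : ∑ k ∈ range (D+1), k * (2*n-1-k).choose m
            = ∑ k ∈ range (D+1), k * (D + m - k).choose m := by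
          apply Finset.sum_congr rfl
          intro k _
          rw [show 2*n-1-k = D + m - k by omega]
        rw [this, aux_sum, show D + m + 1 = 2*n by omega]
        exact Nat.choose_le_middle (m+2) (2*n) |>.trans (by rw [Nat.mul_div_cancel_left n (by norm_num)])
      have habs : |((g.eval 1 : ℤ) : ℝ)|
          ≤ (1 - x) * (12 * (W:ℝ) * ((2*n).choose n : ℝ)) := by
        rw [e3]
        calc |∑ k ∈ range (D+1), (g.coeff k : ℝ) * (1 - x ^ k)|
            ≤ ∑ k ∈ range (D+1), |(g.coeff k : ℝ) * (1 - x ^ k)| :=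
              Finset.abs_sum_le_sum_abs _ _
          _ ≤ ∑ k ∈ range (D+1),
              (12 * (W:ℝ) * ((2*n-1-k).choose m : ℝ)) * (k * (1 - x)) := by
              apply Finset.sum_le_sum
              intro k _
              rw [abs_mul]
              have h1 : |1 - x ^ k| ≤ k * (1 - x) := by
                rw [abs_of_nonneg (by nlinarith [pow_le_one₀ hx0 hx2.le (n := k)])]
                exact pow_bound x hx0 hx2.le k
              exact mul_le_mul (hcoeffR k) h1 (abs_nonneg _)
                (by positivity)
          _ = (1 - x) * (12 * (W:ℝ) *
                ∑ k ∈ range (D+1), ((k * ((2*n-1-k).choose m) : ℕ) : ℝ)) := by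
              rw [Finset.mul_sum, Finset.mul_sum]
              apply Finset.sum_congr rfl
              intro k _
              push_cast
              ring
          _ ≤ (1 - x) * (12 * (W:ℝ) * ((2*n).choose n : ℝ)) := by
              have hsum' : (∑ k ∈ range (D+1), ((k * ((2*n-1-k).choose m) : ℕ) : ℝ))
                  ≤ ((2*n).choose n : ℝ) := by
                rw [← Nat.cast_sum]
                exact_mod_cast hsumnat
              have h1x : (0:ℝ) ≤ 1 - x := by linarith
              apply mul_le_mul_of_nonneg_left _ h1x
              apply mul_le_mul_of_nonneg_left hsum' (by positivity)
      have h1le : (1:ℝ) ≤ |((g.eval 1 : ℤ) : ℝ)| := by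
        rw [← Int.cast_abs]
        exact_mod_cast Int.one_le_abs (by exact_mod_cast hg1)
      have hsmall : (1 - x) * (12 * (W:ℝ) * ((2*n).choose n : ℝ)) < 1 := by
        have hlt1 : 1 - x < 1 / (24 * (W : ℝ) * ((2 * n).choose n : ℝ)) := by linarith
        have h12 : (0:ℝ) < 12 * (W:ℝ) * ((2*n).choose n : ℝ) := by positivity
        calc (1 - x) * (12 * (W:ℝ) * ((2*n).choose n : ℝ))
            < (1 / (24 * (W : ℝ) * ((2 * n).choose n : ℝ)))
              * (12 * (W:ℝ) * ((2*n).choose n : ℝ)) := by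
              exact mul_lt_mul_of_pos_right hlt1 h12
          _ = 1/2 := by field_simp; ring
          _ < 1 := by norm_num
      linarith

/-- Let `n, W` be positive integers and `Δ` a nonzero integer polynomial of
degree at most `2n-1` whose coefficients all have absolute value at most `12W`. Then `Δ`
has no real root in the open interval `(1 - 1/(24 W binom(2n, n)), 1)`. -/
theorem stmt_17 (n W : ℕ) (hn : 0 < n) (hW : 0 < W)
    (Δ : Polynomial ℤ) (hΔ : Δ ≠ 0) (hdeg : Δ.natDegree ≤ 2 * n - 1)
    (hcoeff : ∀ k, |Δ.coeff k| ≤ 12 * (W : ℤ)) :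
    ∀ x : ℝ, 1 - 1 / (24 * (W : ℝ) * ((2 * n).choose n : ℝ)) < x → x < 1 →
      Polynomial.aeval x Δ ≠ 0 := by
  intro x hx1 hx2
  apply key n W hn hW x hx1 hx2 (2*n-1) le_rfl Δ hΔ hdeg
  intro k
  simpa using hcoeff k
end

section
/- Let n, W, M be positive integers and let \Delta(\alpha) = \sum_{k=0}^{2n-1} c_k \alpha^k be a nonzero polynomial with integer coefficients satisfying |c_k| \leq 2 n W M^{2n-1} \binom{2n-1}{k} for all k. Then \Delta has no real root in the open interval (1 - 2^{\lfloor 2n/3 \rfloor - 2}/(n W (2M)^{2n-1} \binom{2n-1}{\lfloor 2n/3 \rfloor}), \, 1). -/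
/-!
Write `N = 2n - 1` and `x = 1 + s`. The coefficients of the Taylor expansion of `Δ` at `1` are
`∑ₖ binom(k, i) cₖ`, bounded by `2nWM^N binom(N, i) 2^(N-i)`, and `i ↦ binom(N, i) 2^(N-i)` peaks at
`i = ⌊(N + 1)/3⌋ = ⌊2n/3⌋`; call the resulting uniform bound `B`. A nonzero integer polynomial with
coefficients bounded by `B` has no root `s` with `0 < |s| < 1/(B + 1)`: after dividing out the power
of `X`, the constant term is an integer of absolute value at least `1`, while the other terms
contribute at most `B|s|/(1 - |s|) < 1`. The radius `ε` of the statement satisfies `2Bε = 1`.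
-/

open Polynomial Finset

namespace Nat

theorem sum_range_choose_mul_choose (N i : ℕ) :
    ∑ k ∈ range (N + 1), N.choose k * k.choose i = N.choose i * 2 ^ (N - i) := by
  rcases lt_or_ge N i with hNi | hiN
  · rw [choose_eq_zero_of_lt hNi, zero_mul]
    exact sum_eq_zero fun k hk => by
      rw [choose_eq_zero_of_lt (n := k) (by grind), mul_zero]
  rw [range_eq_Ico, ← sum_Ico_consecutive _ (zero_le i) (by omega : i ≤ N + 1),
    sum_eq_zero fun k hk => by rw [choose_eq_zero_of_lt (mem_Ico.1 hk).2, mul_zero],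
    zero_add, sum_Ico_eq_sum_range]
  rw [sum_congr rfl fun r _ => by rw [choose_mul (le_add_right i r),
    Nat.add_sub_cancel_left], ← mul_sum, show N + 1 - i = N - i + 1 by omega, sum_range_choose]

theorem choose_succ_mul_two_pow {N i : ℕ} (hi : i < N) :
    N.choose (i + 1) * 2 ^ (N - (i + 1)) * (2 * (i + 1)) = N.choose i * 2 ^ (N - i) * (N - i) := by
  rw [show 2 ^ (N - i) = 2 ^ (N - (i + 1)) * 2 by rw [← pow_succ]; congr 1; omega]
  linear_combination (2 ^ (N - (i + 1)) * 2) * choose_succ_right_eq N i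

theorem choose_mul_two_pow_le (N i : ℕ) :
    N.choose i * 2 ^ (N - i) ≤ N.choose ((N + 1) / 3) * 2 ^ (N - (N + 1) / 3) := by
  set g : ℕ → ℕ := fun i => N.choose i * 2 ^ (N - i)
  have mono : MonotoneOn g (Set.Iic ((N + 1) / 3)) := by
    refine monotoneOn_of_le_succ Set.ordConnected_Iic fun a _ _ ha => ?_
    simp only [Order.succ_eq_add_one, Set.mem_Iic] at ha
    refine Nat.le_of_mul_le_mul_right (c := N - a) ?_ (by omega)
    calc g a * (N - a) = g (a + 1) * (2 * (a + 1)) := (choose_succ_mul_two_pow (by omega)).symm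
      _ ≤ g (a + 1) * (N - a) := Nat.mul_le_mul_left _ (by omega)
  have anti : AntitoneOn g (Set.Ici ((N + 1) / 3)) := by
    refine antitoneOn_of_succ_le Set.ordConnected_Ici fun a _ ha _ => ?_
    simp only [Order.succ_eq_add_one, Set.mem_Ici] at ha ⊢
    rcases lt_or_ge a N with haN | haN
    · refine Nat.le_of_mul_le_mul_right (c := 2 * (a + 1)) ?_ (by omega)
      calc g (a + 1) * (2 * (a + 1)) = g a * (N - a) := choose_succ_mul_two_pow haN
        _ ≤ g a * (2 * (a + 1)) := Nat.mul_le_mul_left _ (by omega)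
    · show N.choose (a + 1) * _ ≤ _
      rw [choose_eq_zero_of_lt (by omega : N < a + 1), zero_mul]
      exact Nat.zero_le _
  rcases le_total i ((N + 1) / 3) with h | h
  · exact mono h (Set.mem_Iic.2 le_rfl) h
  · exact anti (Set.mem_Ici.2 le_rfl) h h

end Nat

namespace Polynomial

theorem taylor_coeff_eq_sum {R : Type*} [CommSemiring R] (r : R) {f : R[X]} {N : ℕ}
    (hf : f.natDegree ≤ N) (i : ℕ) :
    (taylor r f).coeff i = ∑ k ∈ range (N + 1), (k.choose i : R) * f.coeff k * r ^ (k - i) := by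
  rw [taylor_coeff, hasseDeriv_apply, eval_sum, sum_over_range' _ _ (N + 1) (by omega)]
  · simp only [eval_monomial]
  · simp

theorem abs_taylor_one_coeff_le {R : Type*} [CommRing R] [LinearOrder R] [IsStrictOrderedRing R]
    {f : R[X]} {N : ℕ} (hf : f.natDegree ≤ N) {K : R} (hK : ∀ k, |f.coeff k| ≤ K * N.choose k)
    (i : ℕ) : |(taylor 1 f).coeff i| ≤ K * (N.choose i * 2 ^ (N - i) : ℕ) := calc
  _ ≤ ∑ k ∈ range (N + 1), (k.choose i : R) * |f.coeff k| := by
      rw [taylor_coeff_eq_sum 1 hf]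
      refine (abs_sum_le_sum_abs _ _).trans (le_of_eq (sum_congr rfl fun k _ => ?_))
      rw [one_pow, mul_one, abs_mul, Nat.abs_cast]
  _ ≤ ∑ k ∈ range (N + 1), (k.choose i : R) * (K * N.choose k) :=
      sum_le_sum fun k _ => mul_le_mul_of_nonneg_left (hK k) (Nat.cast_nonneg _)
  _ = K * (N.choose i * 2 ^ (N - i) : ℕ) := by
      rw [← Nat.sum_range_choose_mul_choose, Nat.cast_sum, mul_sum]
      exact sum_congr rfl fun k _ => by push_cast; ring

theorem aeval_ne_zero_of_coeff_zero_ne_zero {q : ℤ[X]} (hq : q.coeff 0 ≠ 0) {B t : ℝ}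
    (hB : ∀ i, |(q.coeff i : ℝ)| ≤ B) (ht : (B + 1) * |t| < 1) : aeval t q ≠ 0 := by
  have hB0 : 0 ≤ B := (abs_nonneg _).trans (hB 0)
  have ht1 : |t| < 1 := by nlinarith [abs_nonneg t]
  have hq0 : (1 : ℝ) ≤ |(q.coeff 0 : ℝ)| := by exact_mod_cast Int.one_le_abs hq
  have htail : |∑ i ∈ Ico 1 (q.natDegree + 1), (q.coeff i : ℝ) * t ^ i| < 1 := calc
    _ ≤ ∑ i ∈ Ico 1 (q.natDegree + 1), B * |t| ^ i := by
        refine (abs_sum_le_sum_abs _ _).trans (sum_le_sum fun i _ => ?_)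
        rw [abs_mul, abs_pow]
        exact mul_le_mul_of_nonneg_right (hB i) (by positivity)
    _ ≤ B * (|t| ^ 1 / (1 - |t|)) := by
        rw [← mul_sum]
        exact mul_le_mul_of_nonneg_left (geom_sum_Ico_le_of_lt_one (abs_nonneg t) ht1) hB0
    _ < 1 := by
        rw [pow_one, ← mul_div_assoc, div_lt_one (by linarith)]
        linarith
  rw [aeval_eq_sum_range, range_eq_Ico, sum_eq_sum_Ico_succ_bot (Nat.succ_pos _)]
  simp only [zsmul_eq_mul, pow_zero, mul_one]
  intro h
  rw [eq_neg_of_add_eq_zero_left h, abs_neg] at hq0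
  linarith

theorem aeval_ne_zero_of_abs_coeff_le {p : ℤ[X]} (hp : p ≠ 0) {B t : ℝ}
    (hB : ∀ i, |(p.coeff i : ℝ)| ≤ B) (ht0 : t ≠ 0) (ht : (B + 1) * |t| < 1) :
    aeval t p ≠ 0 := by
  obtain ⟨q, hpq, hq⟩ := p.exists_eq_pow_rootMultiplicity_mul_and_not_dvd hp 0
  rw [map_zero, sub_zero, X_dvd_iff] at hq
  generalize p.rootMultiplicity 0 = r at hpq
  rw [map_zero, sub_zero] at hpq
  subst hpq
  rw [map_mul, map_pow, aeval_X]
  refine mul_ne_zero (pow_ne_zero _ ht0) (aeval_ne_zero_of_coeff_zero_ne_zero hq (fun i => ?_) ht)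
  simpa only [coeff_X_pow_mul] using hB (i + r)

end Polynomial

/-- Let `n, W, M` be positive integers and `Δ = ∑_{k=0}^{2n-1} c_k α^k` a
nonzero integer polynomial with `|c_k| ≤ 2 n W M^(2n-1) binom(2n-1, k)` for all `k`. Then
`Δ` has no real root in the open interval
`(1 - 2^(⌊2n/3⌋-2)/(n W (2M)^(2n-1) binom(2n-1, ⌊2n/3⌋)), 1)`. -/
theorem stmt_18 (n W M : ℕ) (hn : 0 < n) (hW : 0 < W) (hM : 0 < M)
    (Δ : Polynomial ℤ) (hΔ : Δ ≠ 0) (hdeg : Δ.natDegree ≤ 2 * n - 1)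
    (hcoeff : ∀ k, |Δ.coeff k| ≤ 2 * (n : ℤ) * (W : ℤ) * (M : ℤ) ^ (2 * n - 1) *
      ((2 * n - 1).choose k : ℤ)) :
    ∀ x : ℝ,
      1 - (2 : ℝ) ^ (((2 * n / 3 : ℕ) : ℤ) - 2) /
          ((n : ℝ) * (W : ℝ) * (2 * (M : ℝ)) ^ (2 * n - 1) *
            ((2 * n - 1).choose (2 * n / 3) : ℝ)) < x →
      x < 1 → Polynomial.aeval x Δ ≠ 0 := by
  intro x hx hx1
  set N := 2 * n - 1
  have hm : 2 * n / 3 = (N + 1) / 3 := by omega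
  set m := 2 * n / 3
  have hchoose : 0 < N.choose m := Nat.choose_pos (by omega)
  set B : ℤ := 2 * n * W * M ^ N * (N.choose m * 2 ^ (N - m) : ℕ)
  set ε : ℝ := 2 ^ ((m : ℤ) - 2) / (n * W * (2 * M) ^ N * N.choose m) with hε
  have hB : ∀ i, |((taylor 1 Δ).coeff i : ℝ)| ≤ B := fun i => by
    have hi := hm ▸ Nat.choose_mul_two_pow_le N i
    exact_mod_cast (abs_taylor_one_coeff_le hdeg hcoeff i).trans
      (mul_le_mul_of_nonneg_left (Nat.cast_le.2 hi) (by positivity))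
  have hB1 : (1 : ℝ) ≤ B := by exact_mod_cast (show (0 : ℤ) < B by positivity)
  have hBε : 2 * B * ε = 1 := by
    have h2 : (2 : ℝ) ^ N = 2 ^ (N - m) * 2 ^ m := by rw [← pow_add, Nat.sub_add_cancel (by omega)]
    rw [hε, zpow_sub₀ two_ne_zero, zpow_natCast, mul_pow, h2]
    push_cast [B]
    field_simp
  have htaylor : aeval x Δ = aeval (x - 1) (taylor 1 Δ) := by
    simp [taylor_apply, aeval_comp]
  rw [htaylor]
  refine aeval_ne_zero_of_abs_coeff_le (mt (taylor_eq_zero 1 Δ).1 hΔ) hB (by linarith) ?_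
  calc (B + 1) * |x - 1| ≤ 2 * B * (1 - x) := by
        rw [abs_of_neg (by linarith)]; nlinarith
    _ < 2 * B * ε := by gcongr; linarith
    _ = 1 := hBε
end
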